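/- arXiv:1307.4142 — 9 statements merged into one kernel-verified Lean document; each statement's English description precedes it below -/
import Mathlib

section
/- Let R be a ring with involution and let p, q ∈ R be projections. Then the following six conditions are equivalent: (1) 1 - pq is Moore–Penrose invertible; (2) 1 - pqp is Moore–Penrose invertible; (3) p - pqp is Moore–Penrose invertible; (4) 1 - qp is Moore–Penrose invertible; (5) 1 - qpq is Moore–Penrose invertible; (6) q - qpq is Moore–Penrose invertible. -/
set_option maxHeartbeats 1600000

/-- `b` is a Moore–Penrose inverse of `a`. -/
def IsMPInv {R : Type*} [Ring R] [StarRing R] (a b : R) : Prop :=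
  a * b * a = a ∧ b * a * b = b ∧ star (a * b) = a * b ∧ star (b * a) = b * a

/-- `a` is Moore–Penrose invertible. -/
def IsMPInvertible {R : Type*} [Ring R] [StarRing R] (a : R) : Prop :=
  ∃ b, IsMPInv a b

/-- A projection: a self-adjoint idempotent. -/
def IsProjection {R : Type*} [Ring R] [StarRing R] (p : R) : Prop :=
  p * p = p ∧ star p = p

/-- A `*`-reducing ring: `a* a = 0` implies `a = 0`. -/
def IsStarReducing (R : Type*) [Ring R] [StarRing R] : Prop :=
  ∀ a : R, star a * a = 0 → a = 0

section MPTools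

set_option linter.unusedSectionVars false

variable {R : Type*} [Ring R] [StarRing R]

private lemma assoc_rule {a b c : R} (h : a * b = c) : ∀ z : R, a * (b * z) = c * z :=
  fun z => by rw [← mul_assoc, h]

lemma mp_star {a b : R} (h : IsMPInv a b) : IsMPInv (star a) (star b) := by
  obtain ⟨h1, h2, h3, h4⟩ := h
  refine ⟨?_, ?_, ?_, ?_⟩
  · calc star a * star b * star a = star (a * (b * a)) := by
          simp only [star_mul, mul_assoc]
      _ = star a := by rw [← mul_assoc, h1]
  · calc star b * star a * star b = star (b * (a * b)) := by
          simp only [star_mul, mul_assoc]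
      _ = star b := by rw [← mul_assoc, h2]
  · calc star (star a * star b) = star (star (b * a)) := by rw [← star_mul]
      _ = b * a := star_star _
      _ = star (b * a) := h4.symm
      _ = star a * star b := star_mul _ _
  · calc star (star b * star a) = star (star (a * b)) := by rw [← star_mul]
      _ = a * b := star_star _
      _ = star (a * b) := h3.symm
      _ = star b * star a := star_mul _ _

lemma mp_unique {a b₁ b₂ : R} (h₁ : IsMPInv a b₁) (h₂ : IsMPInv a b₂) : b₁ = b₂ := by
  have hab : a * b₁ = a * b₂ := by
    have eA : a * b₁ = (a * b₂) * (a * b₁) := by rw [← mul_assoc, h₂.1]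
    have eB : (a * b₂) * (a * b₁) = a * b₂ := by
      calc (a * b₂) * (a * b₁) = star (a * b₂) * star (a * b₁) := by
            rw [h₂.2.2.1, h₁.2.2.1]
        _ = star ((a * b₁) * (a * b₂)) := (star_mul _ _).symm
        _ = star (a * b₂) := by rw [← mul_assoc, h₁.1]
        _ = a * b₂ := h₂.2.2.1
    exact eA.trans eB
  have hba : b₁ * a = b₂ * a := by
    have eA : b₁ * a = (b₁ * a) * (b₂ * a) := by
      rw [mul_assoc, ← mul_assoc a b₂ a, h₂.1]
    have eB : (b₁ * a) * (b₂ * a) = b₂ * a := by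
      calc (b₁ * a) * (b₂ * a) = star (b₁ * a) * star (b₂ * a) := by
            rw [h₁.2.2.2, h₂.2.2.2]
        _ = star ((b₂ * a) * (b₁ * a)) := (star_mul _ _).symm
        _ = star (b₂ * a) := by rw [mul_assoc b₂ a _, ← mul_assoc a b₁ a, h₁.1]
        _ = b₂ * a := h₂.2.2.2
    exact eA.trans eB
  calc b₁ = b₁ * a * b₁ := h₁.2.1.symm
    _ = b₂ * a * b₁ := by rw [hba]
    _ = b₂ * (a * b₁) := mul_assoc _ _ _
    _ = b₂ * (a * b₂) := by rw [hab]
    _ = b₂ * a * b₂ := (mul_assoc _ _ _).symm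
    _ = b₂ := h₂.2.1

lemma mp_comm {a b y : R} (h : IsMPInv a b) (h1 : y * a = a * y)
    (h2 : y * star a = star a * y) : y * b = b * y := by
  obtain ⟨m1, m2, m3, m4⟩ := h
  have haab : star a * (a * b) = star a := by
    calc star a * (a * b) = star a * star (a * b) := by rw [m3]
      _ = star a * (star b * star a) := by rw [star_mul]
      _ = star (a * (b * a)) := by simp only [star_mul]; noncomm_ring
      _ = star a := by rw [← mul_assoc, m1]
  have hfa : (b * a) * star a = star a := by
    have e : a * (b * a) = a := by rw [← mul_assoc, m1]
    calc (b * a) * star a = star (a * (b * a)) := by rw [star_mul, m4]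
      _ = star a := by rw [e]
  have hye : y * (a * b) = (a * b) * (y * (a * b)) := by
    calc y * (a * b) = (y * a) * b := (mul_assoc _ _ _).symm
      _ = (a * y) * b := by rw [h1]
      _ = a * (y * b) := mul_assoc _ _ _
      _ = (a * b * a) * (y * b) := by rw [m1]
      _ = (a * b) * ((a * y) * b) := by noncomm_ring
      _ = (a * b) * ((y * a) * b) := by rw [h1]
      _ = (a * b) * (y * (a * b)) := by rw [mul_assoc y a b]
  have hey' : (a * b) * (y * (a * b)) = (a * b) * y := by
    calc (a * b) * (y * (a * b)) = star (a * b) * (y * (a * b)) := by rw [m3]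
      _ = (star b * star a) * (y * (a * b)) := by rw [star_mul]
      _ = star b * ((star a * y) * (a * b)) := by noncomm_ring
      _ = star b * ((y * star a) * (a * b)) := by rw [h2]
      _ = star b * (y * (star a * (a * b))) := by rw [mul_assoc y _ _]
      _ = star b * (y * star a) := by rw [haab]
      _ = star b * (star a * y) := by rw [h2]
      _ = (star b * star a) * y := (mul_assoc _ _ _).symm
      _ = star (a * b) * y := by rw [star_mul]
      _ = (a * b) * y := by rw [m3]
  have hey : (a * b) * y = y * (a * b) := (hye.trans hey').symm
  have hyf : y * (b * a) = (b * a) * (y * (b * a)) := by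
    calc y * (b * a) = y * star (b * a) := by rw [m4]
      _ = y * (star a * star b) := by rw [star_mul]
      _ = (y * star a) * star b := (mul_assoc _ _ _).symm
      _ = (star a * y) * star b := by rw [h2]
      _ = (((b * a) * star a) * y) * star b := by rw [hfa]
      _ = (b * a) * ((star a * y) * star b) := by noncomm_ring
      _ = (b * a) * ((y * star a) * star b) := by rw [h2]
      _ = (b * a) * (y * (star a * star b)) := by rw [mul_assoc y _ _]
      _ = (b * a) * (y * star (b * a)) := by rw [← star_mul]
      _ = (b * a) * (y * (b * a)) := by rw [m4]
  have hfy' : (b * a) * (y * (b * a)) = (b * a) * y := by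
    calc (b * a) * (y * (b * a)) = b * ((a * y) * (b * a)) := by noncomm_ring
      _ = b * ((y * a) * (b * a)) := by rw [← h1]
      _ = b * (y * (a * (b * a))) := by rw [mul_assoc y a _]
      _ = b * (y * a) := by rw [show a * (b * a) = a from by rw [← mul_assoc, m1]]
      _ = b * (a * y) := by rw [h1]
      _ = (b * a) * y := (mul_assoc _ _ _).symm
  have hfy : y * (b * a) = (b * a) * y := hyf.trans hfy'
  calc y * b = y * ((b * a) * b) := by rw [mul_assoc, ← mul_assoc b a b, m2]
    _ = (y * (b * a)) * b := (mul_assoc _ _ _).symm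
    _ = ((b * a) * y) * b := by rw [hfy]
    _ = (b * (y * a)) * b := by rw [mul_assoc b a y, ← h1]
    _ = (b * y) * (a * b) := by noncomm_ring
    _ = b * (y * (a * b)) := mul_assoc _ _ _
    _ = b * ((a * b) * y) := by rw [← hey]
    _ = (b * (a * b)) * y := (mul_assoc _ _ _).symm
    _ = b * y := by rw [← mul_assoc, m2]

lemma sa_crit {s u : R} (hs : star s = s) (h : s = s * s * u) :
    IsMPInv s (star u * s * u) := by
  have h2 : s = star u * (s * s) := by
    calc s = star s := hs.symm
      _ = star (s * s * u) := by rw [← h]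
      _ = star u * (s * s) := by
          simp only [star_mul, hs, mul_assoc]
  have h' : s = s * (s * u) := by rw [← mul_assoc]; exact h
  have hA1 : s * star u * s = s := by
    have e : s * star u * (s * s) = s * s := by
      rw [mul_assoc s (star u) _, ← h2]
    calc s * star u * s = s * star u * (s * (s * u)) := by rw [← h']
      _ = (s * star u * (s * s)) * u := by noncomm_ring
      _ = (s * s) * u := by rw [e]
      _ = s := h.symm
  have hA2 : s * u * s = s := by
    nth_rewrite 1 [h2]
    calc star u * (s * s) * u * s = star u * ((s * (s * u)) * s) := by noncomm_ring
      _ = star u * (s * s) := by rw [← h']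
      _ = s := h2.symm
  have hB3 : s * u = star u * s := by
    nth_rewrite 1 [h2]
    rw [mul_assoc, ← h]
  have hst : s * (star u * s * u) = s * u := by
    calc s * (star u * s * u) = (s * star u * s) * u := by noncomm_ring
      _ = s * u := by rw [hA1]
  have hts : (star u * s * u) * s = star u * s := by
    calc (star u * s * u) * s = star u * (s * u * s) := by noncomm_ring
      _ = star u * s := by rw [hA2]
  refine ⟨?_, ?_, ?_, ?_⟩
  · calc s * (star u * s * u) * s = (s * star u * s) * (u * s) := by noncomm_ring
      _ = s * (u * s) := by rw [hA1]
      _ = s * u * s := by rw [← mul_assoc]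
      _ = s := hA2
  · calc (star u * s * u) * s * (star u * s * u)
        = (star u * (s * u * s)) * (star u * (s * u)) := by noncomm_ring
      _ = (star u * s) * (star u * (s * u)) := by rw [hA2]
      _ = (star u * (s * star u * s)) * u := by noncomm_ring
      _ = (star u * s) * u := by rw [hA1]
      _ = star u * s * u := rfl
  · rw [hst]
    calc star (s * u) = star u * star s := star_mul _ _
      _ = star u * s := by rw [hs]
      _ = s * u := hB3.symm
  · rw [hts]
    calc star (star u * s) = star s * u := by rw [star_mul, star_star]
      _ = s * u := by rw [hs]
      _ = star u * s := hB3

lemma lemA {a x y : R} (h1 : a = a * star a * a * x) (h2 : a = y * (a * star a * a)) :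
    IsMPInvertible a := by
  have hsh : star (star a * a) = star a * a := by
    rw [star_mul, star_star]
  have hsa : star a = star x * (star a * (a * star a)) := by
    calc star a = star (a * star a * a * x) := by rw [← h1]
      _ = star x * (star a * (a * star a)) := by
          simp only [star_mul, star_star, mul_assoc]
  have e1 : star a * a = star x * ((star a * a) * (star a * a)) := by
    nth_rewrite 1 [hsa]
    noncomm_ring
  have hhx : star a * a = (star a * a) * (star a * a) * x := by
    calc star a * a = star (star a * a) := hsh.symm
      _ = star (star x * ((star a * a) * (star a * a))) := by rw [← e1]
      _ = (star a * a) * (star a * a) * x := by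
          simp only [star_mul, star_star, mul_assoc]
  have hmp := sa_crit hsh hhx
  set h : R := star a * a with hh_def
  set th : R := star x * h * x with hth_def
  obtain ⟨m1, m2, m3, m4⟩ := hmp
  have hstar_th : star th = th := by
    rw [hth_def]
    simp only [star_mul, star_star, hsh, mul_assoc]
  have hcomm : h * th = th * h := by
    calc h * th = star (h * th) := m3.symm
      _ = star th * star h := star_mul _ _
      _ = th * h := by rw [hsh, hstar_th]
  have hhh_th : h * h * th = h := by
    calc h * h * th = h * (h * th) := mul_assoc _ _ _
      _ = h * (th * h) := by rw [hcomm]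
      _ = h * th * h := (mul_assoc _ _ _).symm
      _ = h := m1
  have ha2' : a = y * (a * h) := by
    rw [hh_def, ← mul_assoc a (star a) a]; exact h2
  have haht : a * h * th = a := by
    nth_rewrite 1 [ha2']
    calc y * (a * h) * h * th = y * (a * (h * h * th)) := by noncomm_ring
      _ = y * (a * h) := by rw [hhh_th]
      _ = a := ha2'.symm
  refine ⟨th * star a, ?_, ?_, ?_, ?_⟩
  · calc a * (th * star a) * a = a * (th * h) := by rw [hh_def]; noncomm_ring
      _ = a * (h * th) := by rw [hcomm]
      _ = a * h * th := (mul_assoc _ _ _).symm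
      _ = a := haht
  · calc th * star a * a * (th * star a) = (th * h * th) * star a := by
          rw [hh_def]; noncomm_ring
      _ = th * star a := by rw [m2]
  · have e : a * (th * star a) = a * th * star a := (mul_assoc _ _ _).symm
    rw [e]
    calc star (a * th * star a) = a * star th * star a := by
          simp only [star_mul, star_star, mul_assoc]
      _ = a * th * star a := by rw [hstar_th]
  · have e : th * star a * a = th * h := by rw [hh_def, mul_assoc]
    rw [e]; exact m4

lemma mp_extract {a b : R} (hb : IsMPInv a b) : a = a * (star a * star b) := by
  calc a = a * (b * a) := by rw [← mul_assoc, hb.1]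
    _ = a * star (b * a) := by rw [hb.2.2.2]
    _ = a * (star a * star b) := by rw [star_mul]

lemma sa_extract {s b : R} (hs : star s = s) (hb : IsMPInv s b) : s = s * s * star b := by
  calc s = s * (star s * star b) := mp_extract hb
    _ = s * (s * star b) := by rw [hs]
    _ = s * s * star b := by rw [← mul_assoc]

private lemma bigP3 (p s k k' c f : R)
    (pp : p*p = p)
    (ps : p*s = s) (sp : s*p = s)
    (pc : p*c = c) (cp : c*p = c)
    (pf : p*f = f) (fp : f*p = f)
    (pk : p*k = k) (kp : k*p = 0)
    (pk' : p*k' = 0) (k'p : k'*p = k')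
    (sc : s*c = f) (cs : c*s = f)
    (sf : s*f = s) (fs : f*s = s)
    (sk' : s*k' = 0) (ks : k*s = 0)
    (cf : c*f = c) (fc : f*c = c)
    (ck' : c*k' = 0) (kc : k*c = 0)
    (ff : f*f = f)
    (fk' : f*k' = 0) (kf : k*f = 0)
    (kk : k*k = 0) (k'k' : k'*k' = 0)
    (kk' : k*k' = s - s*s) :
    (1 - p + s*s*s - s*s*k - k'*s + k'*k) *
      (c*c + c - f + c*k + k'*c + (1 - p - k'*((p - f)*k))) = 1 - p + s := by
  have arule : ∀ {a b c : R}, a * b = c → ∀ z : R, a * (b * z) = c * z :=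
    fun h z => by rw [← mul_assoc, h]
  simp only [mul_sub, sub_mul, mul_add, add_mul, mul_one, one_mul, mul_zero, zero_mul,
    add_zero, zero_add, sub_zero, zero_sub, mul_assoc,
    pp, ps, sp, pc, cp, pf, fp, pk, kp, pk', k'p, sc, cs, sf, fs, sk', ks, cf, fc,
    ck', kc, ff, fk', kf, kk, k'k', kk',
    arule pp, arule ps, arule sp, arule pc, arule cp, arule pf, arule fp, arule pk,
    arule kp, arule pk', arule k'p, arule sc, arule cs, arule sf, arule fs, arule sk',
    arule ks, arule cf, arule fc, arule ck', arule kc, arule ff, arule fk', arule kf,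
    arule kk, arule k'k', arule kk']
  abel

private lemma bigP4 (p s k k' c f : R)
    (pp : p*p = p)
    (ps : p*s = s) (sp : s*p = s)
    (pc : p*c = c) (cp : c*p = c)
    (pf : p*f = f) (fp : f*p = f)
    (pk : p*k = k) (kp : k*p = 0)
    (pk' : p*k' = 0) (k'p : k'*p = k')
    (sc : s*c = f) (cs : c*s = f)
    (sf : s*f = s) (fs : f*s = s)
    (sk' : s*k' = 0) (ks : k*s = 0)
    (cf : c*f = c) (fc : f*c = c)
    (ck' : c*k' = 0) (kc : k*c = 0)
    (ff : f*f = f)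
    (fk' : f*k' = 0) (kf : k*f = 0)
    (kk : k*k = 0) (k'k' : k'*k' = 0)
    (kk' : k*k' = s - s*s) :
    (c*c + c - f + k'*(c*c) + f*k + (1 - p - k'*((p - f)*k))) *
      (1 - p + s*s*s - s*s*k - k'*s + k'*k) = 1 - p + s := by
  have arule : ∀ {a b c : R}, a * b = c → ∀ z : R, a * (b * z) = c * z :=
    fun h z => by rw [← mul_assoc, h]
  simp only [mul_sub, sub_mul, mul_add, add_mul, mul_one, one_mul, mul_zero, zero_mul,
    add_zero, zero_add, sub_zero, zero_sub, mul_assoc,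
    pp, ps, sp, pc, cp, pf, fp, pk, kp, pk', k'p, sc, cs, sf, fs, sk', ks, cf, fc,
    ck', kc, ff, fk', kf, kk, k'k', kk',
    arule pp, arule ps, arule sp, arule pc, arule cp, arule pf, arule fp, arule pk,
    arule kp, arule pk', arule k'p, arule sc, arule cs, arule sf, arule fs, arule sk',
    arule ks, arule cf, arule fc, arule ck', arule kc, arule ff, arule fk', arule kf,
    arule kk, arule k'k', arule kk']
  abel

section Glemmas

/-- (1) implies (2): if `1 - pq` is MP invertible then so is `1 - pqp`. -/
lemma G1 (p q : R) (hp : IsProjection p) (hq : IsProjection q) (h : IsMPInvertible (1 - p * q)) : IsMPInvertible (1 - p * q * p) := by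
  obtain ⟨b, hb⟩ := h
  have hpp : ∀ z : R, p * (p * z) = p * z := fun z => by rw [← mul_assoc, hp.1]
  have hqq : ∀ z : R, q * (q * z) = q * z := fun z => by rw [← mul_assoc, hq.1]
  have hstarA : star ((1 : R) - p * q) = 1 - q * p := by
    simp [star_sub, star_mul, star_one, hp.2, hq.2]
  have hstarS : star ((1 : R) - p * q * p) = 1 - p * q * p := by
    simp [star_sub, star_mul, star_one, hp.2, hq.2, mul_assoc]
  have hAb : (1 : R) - p * q = (1 - p * q) * ((1 - q * p) * star b) := by
    calc (1 : R) - p * q = (1 - p * q) * (star (1 - p * q) * star b) := mp_extract hb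
      _ = (1 - p * q) * ((1 - q * p) * star b) := by rw [hstarA]
  have pureR : ((1 : R) + (p * q - p * q * p)) * (1 - p * q) = 1 - p * q * p := by
    simp only [mul_sub, sub_mul, mul_add, add_mul, mul_one, one_mul, mul_assoc,
      hp.1, hq.1, hpp, hqq]
    try abel
  have pureQ : ((1 : R) + (p * q - p * q * p)) * ((1 - p * q) * (1 - q * p)) =
      (1 - p * q * p) * (1 - p * q * p) * (1 - (q * p - p * q * p)) := by
    simp only [mul_sub, sub_mul, mul_add, add_mul, mul_one, one_mul, mul_assoc,
      hp.1, hq.1, hpp, hqq]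
    try abel
  have key : (1 : R) - p * q * p =
      (1 - p * q * p) * (1 - p * q * p) * ((1 - (q * p - p * q * p)) * star b) := by
    calc (1 : R) - p * q * p = (1 + (p * q - p * q * p)) * (1 - p * q) := pureR.symm
      _ = (1 + (p * q - p * q * p)) * ((1 - p * q) * ((1 - q * p) * star b)) := by
          rw [← hAb]
      _ = ((1 + (p * q - p * q * p)) * ((1 - p * q) * (1 - q * p))) * star b := by
          noncomm_ring
      _ = ((1 - p * q * p) * (1 - p * q * p) * (1 - (q * p - p * q * p))) * star b := by
          rw [pureQ]
      _ = (1 - p * q * p) * (1 - p * q * p) * ((1 - (q * p - p * q * p)) * star b) := by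
          rw [mul_assoc ((1 - p * q * p) * (1 - p * q * p)) _ _]
  exact ⟨_, sa_crit hstarS key⟩

/-- (2) implies (3). -/
lemma G3a (p q : R) (hp : IsProjection p) (hq : IsProjection q) (h : IsMPInvertible (1 - p * q * p)) : IsMPInvertible (p - p * q * p) := by
  obtain ⟨b, hb⟩ := h
  have hpp : ∀ z : R, p * (p * z) = p * z := fun z => by rw [← mul_assoc, hp.1]
  have hqq : ∀ z : R, q * (q * z) = q * z := fun z => by rw [← mul_assoc, hq.1]
  have hstarS : star ((1 : R) - p * q * p) = 1 - p * q * p := by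
    simp [star_sub, star_mul, star_one, hp.2, hq.2, mul_assoc]
  have hstars : star (p - p * q * p) = p - p * q * p := by
    simp [star_sub, star_mul, hp.2, hq.2, mul_assoc]
  have hu : (1 : R) - p * q * p = (1 - p * q * p) * (1 - p * q * p) * star b :=
    sa_extract hstarS hb
  have e : (p - p * q * p) * (p - p * q * p) * p = p * ((1 - p * q * p) * (1 - p * q * p)) := by
    simp only [mul_sub, sub_mul, mul_add, add_mul, mul_one, one_mul, mul_assoc,
      hp.1, hq.1, hpp, hqq]
    try abel
  have e0 : p - p * q * p = p * (1 - p * q * p) := by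
    simp only [mul_sub, sub_mul, mul_one, mul_assoc, hp.1, hpp]
  have key : p - p * q * p = (p - p * q * p) * (p - p * q * p) * (p * star b) := by
    calc p - p * q * p = p * (1 - p * q * p) := e0
      _ = p * ((1 - p * q * p) * (1 - p * q * p) * star b) := by rw [← hu]
      _ = (p * ((1 - p * q * p) * (1 - p * q * p))) * star b := by noncomm_ring
      _ = ((p - p * q * p) * (p - p * q * p) * p) * star b := by rw [e]
      _ = (p - p * q * p) * (p - p * q * p) * (p * star b) := by
          rw [mul_assoc ((p - p * q * p) * (p - p * q * p)) _ _]
  exact ⟨_, sa_crit hstars key⟩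

/-- (3) implies (2). -/
lemma G3b (p q : R) (hp : IsProjection p) (hq : IsProjection q) (h : IsMPInvertible (p - p * q * p)) : IsMPInvertible (1 - p * q * p) := by
  obtain ⟨b, hb⟩ := h
  have hpp : ∀ z : R, p * (p * z) = p * z := fun z => by rw [← mul_assoc, hp.1]
  have hqq : ∀ z : R, q * (q * z) = q * z := fun z => by rw [← mul_assoc, hq.1]
  have hstarS : star ((1 : R) - p * q * p) = 1 - p * q * p := by
    simp [star_sub, star_mul, star_one, hp.2, hq.2, mul_assoc]
  have hstars : star (p - p * q * p) = p - p * q * p := by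
    simp [star_sub, star_mul, hp.2, hq.2, mul_assoc]
  have hu : p - p * q * p = (p - p * q * p) * (p - p * q * p) * star b :=
    sa_extract hstars hb
  have e1 : (1 - p * q * p) * (1 - p * q * p) * ((1 : R) - p) = 1 - p := by
    simp only [mul_sub, sub_mul, mul_add, add_mul, mul_one, one_mul, mul_assoc,
      hp.1, hq.1, hpp, hqq]
    try abel
  have e2 : (1 - p * q * p) * (1 - p * q * p) * p = (p - p * q * p) * (p - p * q * p) := by
    simp only [mul_sub, sub_mul, mul_add, add_mul, mul_one, one_mul, mul_assoc,
      hp.1, hq.1, hpp, hqq]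
    try abel
  have key : (1 : R) - p * q * p =
      (1 - p * q * p) * (1 - p * q * p) * ((1 - p) + p * star b) := by
    calc (1 : R) - p * q * p = (1 - p) + (p - p * q * p) := by abel
      _ = (1 - p) + (p - p * q * p) * (p - p * q * p) * star b := by rw [← hu]
      _ = (1 - p * q * p) * (1 - p * q * p) * (1 - p)
            + ((1 - p * q * p) * (1 - p * q * p) * p) * star b := by rw [e1, e2]
      _ = (1 - p * q * p) * (1 - p * q * p) * ((1 - p) + p * star b) := by
          rw [mul_add, mul_assoc ((1 - p * q * p) * (1 - p * q * p)) p (star b)]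
  exact ⟨_, sa_crit hstarS key⟩

set_option linter.unusedVariables false in
/-- (2) implies (1): if `1 - pqp` is MP invertible then so is `1 - pq`. -/
lemma G2 (p q : R) (hp : IsProjection p) (hq : IsProjection q)
    (h : IsMPInvertible (1 - p * q * p)) : IsMPInvertible (1 - p * q) := by
  obtain ⟨t0, ht0⟩ := h
  obtain ⟨S, hS⟩ : ∃ S : R, S = 1 - p * q * p := ⟨_, rfl⟩
  rw [← hS] at ht0
  have arule : ∀ {a b c : R}, a * b = c → ∀ z : R, a * (b * z) = c * z :=
    fun h z => by rw [← mul_assoc, h]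
  have hpp : ∀ z : R, p * (p * z) = p * z := fun z => by rw [← mul_assoc, hp.1]
  have hqq : ∀ z : R, q * (q * z) = q * z := fun z => by rw [← mul_assoc, hq.1]
  have hstarS : star S = S := by
    rw [hS]; simp [star_sub, star_mul, star_one, hp.2, hq.2, mul_assoc]
  have hstarA : star ((1 : R) - p * q) = 1 - q * p := by
    simp [star_sub, star_mul, star_one, hp.2, hq.2]
  have ht0star : star t0 = t0 := by
    have h1 := mp_star ht0
    rw [hstarS] at h1
    exact mp_unique h1 ht0
  have hSp : S * p = p * S := by
    rw [hS]
    simp only [mul_sub, sub_mul, mul_add, add_mul, mul_one, one_mul, mul_assoc,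
      hp.1, hq.1, hpp, hqq]
  have h_pt : p * t0 = t0 * p := mp_comm ht0 hSp.symm (by rw [hstarS]; exact hSp.symm)
  have h_pt' : t0 * p = p * t0 := h_pt.symm
  have h_St : S * t0 = t0 * S := by
    calc S * t0 = star (S * t0) := ht0.2.2.1.symm
      _ = star t0 * star S := star_mul _ _
      _ = t0 * S := by rw [ht0star, hstarS]
  have h_St' : t0 * S = S * t0 := h_St.symm
  have hSSt : S * (S * t0) = S := by
    calc S * (S * t0) = S * (t0 * S) := by rw [← h_St]
      _ = S * t0 * S := by rw [← mul_assoc]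
      _ = S := ht0.1
  have hStt : S * (t0 * t0) = t0 := by
    calc S * (t0 * t0) = (S * t0) * t0 := by rw [← mul_assoc]
      _ = (t0 * S) * t0 := by rw [h_St]
      _ = t0 := ht0.2.1
  have hSSt2 : ∀ z : R, S * (S * (t0 * z)) = S * z :=
    fun z => by rw [← mul_assoc S t0 z, ← mul_assoc, hSSt]
  have hStt2 : ∀ z : R, S * (t0 * (t0 * z)) = t0 * z :=
    fun z => by rw [← mul_assoc t0 t0 z, ← mul_assoc, hStt]
  -- corner facts
  have F_sc : (p * S) * (p * t0) = p * (S * t0) := by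
    simp only [mul_assoc, hpp, hSp, h_pt', h_St', hSSt, hStt, hSSt2, hStt2,
      arule hSp, arule h_pt', arule h_St']
  have F_cs : (p * t0) * (p * S) = p * (S * t0) := by
    simp only [mul_assoc, hpp, hSp, h_pt', h_St', hSSt, hStt, hSSt2, hStt2,
      arule hSp, arule h_pt', arule h_St']
  have F_sf : (p * S) * (p * (S * t0)) = p * S := by
    simp only [mul_assoc, hpp, hSp, h_pt', h_St', hSSt, hStt, hSSt2, hStt2,
      arule hSp, arule h_pt', arule h_St']
  have F_fs : (p * (S * t0)) * (p * S) = p * S := by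
    simp only [mul_assoc, hpp, hSp, h_pt', h_St', hSSt, hStt, hSSt2, hStt2,
      arule hSp, arule h_pt', arule h_St']
  have F_cf : (p * t0) * (p * (S * t0)) = p * t0 := by
    simp only [mul_assoc, hpp, hSp, h_pt', h_St', hSSt, hStt, hSSt2, hStt2,
      arule hSp, arule h_pt', arule h_St']
  have F_fc : (p * (S * t0)) * (p * t0) = p * t0 := by
    simp only [mul_assoc, hpp, hSp, h_pt', h_St', hSSt, hStt, hSSt2, hStt2,
      arule hSp, arule h_pt', arule h_St']
  have F_ff : (p * (S * t0)) * (p * (S * t0)) = p * (S * t0) := by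
    simp only [mul_assoc, hpp, hSp, h_pt', h_St', hSSt, hStt, hSSt2, hStt2,
      arule hSp, arule h_pt', arule h_St']
  have F_fp : (p * (S * t0)) * p = p * (S * t0) := by
    simp only [mul_assoc, hpp, hSp, h_pt', h_St', hSSt, hStt, hSSt2, hStt2,
      arule hSp, arule h_pt', arule h_St']
  have e0 : p - p * q * p = p * S := by
    rw [hS]
    simp only [mul_sub, sub_mul, mul_one, mul_assoc, hp.1, hpp]
  -- micro facts
  have M_ps : p * (p - p * q * p) = p - p * q * p := by
    simp only [mul_sub, sub_mul, mul_add, add_mul, mul_one, one_mul, mul_assoc,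
      hp.1, hq.1, hpp, hqq]
  have M_sp : (p - p * q * p) * p = p - p * q * p := by
    simp only [mul_sub, sub_mul, mul_add, add_mul, mul_one, one_mul, mul_assoc,
      hp.1, hq.1, hpp, hqq]
  have M_pc : p * (p * t0) = p * t0 := hpp t0
  have M_cp : (p * t0) * p = p * t0 := by
    rw [mul_assoc, h_pt', ← mul_assoc, hp.1]
  have M_pf : p * (p * (S * t0)) = p * (S * t0) := hpp _
  have M_pk : p * (p * q - p * q * p) = p * q - p * q * p := by
    simp only [mul_sub, sub_mul, mul_add, add_mul, mul_one, one_mul, mul_assoc,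
      hp.1, hq.1, hpp, hqq]
  have M_kp : (p * q - p * q * p) * p = 0 := by
    simp only [mul_sub, sub_mul, mul_add, add_mul, mul_one, one_mul, mul_assoc,
      hp.1, hq.1, hpp, hqq]
    abel
  have M_pk' : p * (q * p - p * q * p) = 0 := by
    simp only [mul_sub, sub_mul, mul_add, add_mul, mul_one, one_mul, mul_assoc,
      hp.1, hq.1, hpp, hqq]
    abel
  have M_k'p : (q * p - p * q * p) * p = q * p - p * q * p := by
    simp only [mul_sub, sub_mul, mul_add, add_mul, mul_one, one_mul, mul_assoc,
      hp.1, hq.1, hpp, hqq]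
  have M_sc : (p - p * q * p) * (p * t0) = p * (S * t0) := by
    rw [e0]; exact F_sc
  have M_cs : (p * t0) * (p - p * q * p) = p * (S * t0) := by
    rw [e0]; exact F_cs
  have M_sf : (p - p * q * p) * (p * (S * t0)) = p - p * q * p := by
    rw [e0]; exact F_sf
  have M_fs : (p * (S * t0)) * (p - p * q * p) = p - p * q * p := by
    rw [e0]; exact F_fs
  have M_sk' : (p - p * q * p) * (q * p - p * q * p) = 0 := by
    simp only [mul_sub, sub_mul, mul_add, add_mul, mul_one, one_mul, mul_assoc,
      hp.1, hq.1, hpp, hqq]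
    abel
  have M_ks : (p * q - p * q * p) * (p - p * q * p) = 0 := by
    simp only [mul_sub, sub_mul, mul_add, add_mul, mul_one, one_mul, mul_assoc,
      hp.1, hq.1, hpp, hqq]
    abel
  have M_ck' : (p * t0) * (q * p - p * q * p) = 0 := by
    simp only [mul_sub, sub_mul, mul_add, add_mul, mul_one, one_mul, mul_assoc,
      hp.1, hq.1, hpp, hqq, h_pt', arule h_pt']
    abel
  have M_kc : (p * q - p * q * p) * (p * t0) = 0 := by
    simp only [mul_sub, sub_mul, mul_add, add_mul, mul_one, one_mul, mul_assoc,
      hp.1, hq.1, hpp, hqq, h_pt', arule h_pt']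
    abel
  have M_fk' : (p * (S * t0)) * (q * p - p * q * p) = 0 := by
    rw [hS]
    simp only [mul_sub, sub_mul, mul_add, add_mul, mul_one, one_mul, mul_assoc,
      hp.1, hq.1, hpp, hqq, h_pt', arule h_pt']
    abel
  have M_kf : (p * q - p * q * p) * (p * (S * t0)) = 0 := by
    rw [hS]
    simp only [mul_sub, sub_mul, mul_add, add_mul, mul_one, one_mul, mul_assoc,
      hp.1, hq.1, hpp, hqq, h_pt', arule h_pt']
    abel
  have M_kk : (p * q - p * q * p) * (p * q - p * q * p) = 0 := by
    simp only [mul_sub, sub_mul, mul_add, add_mul, mul_one, one_mul, mul_assoc,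
      hp.1, hq.1, hpp, hqq]
    abel
  have M_k'k' : (q * p - p * q * p) * (q * p - p * q * p) = 0 := by
    simp only [mul_sub, sub_mul, mul_add, add_mul, mul_one, one_mul, mul_assoc,
      hp.1, hq.1, hpp, hqq]
    abel
  have M_kk' : (p * q - p * q * p) * (q * p - p * q * p) =
      (p - p * q * p) - (p - p * q * p) * (p - p * q * p) := by
    simp only [mul_sub, sub_mul, mul_add, add_mul, mul_one, one_mul, mul_assoc,
      hp.1, hq.1, hpp, hqq]
    abel
  have hBX := bigP3 p (p - p * q * p) (p * q - p * q * p) (q * p - p * q * p)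
    (p * t0) (p * (S * t0))
    hp.1 M_ps M_sp M_pc M_cp M_pf F_fp M_pk M_kp M_pk' M_k'p M_sc M_cs M_sf M_fs
    M_sk' M_ks F_cf F_fc M_ck' M_kc F_ff M_fk' M_kf M_kk M_k'k' M_kk'
  have hWB := bigP4 p (p - p * q * p) (p * q - p * q * p) (q * p - p * q * p)
    (p * t0) (p * (S * t0))
    hp.1 M_ps M_sp M_pc M_cp M_pf F_fp M_pk M_kp M_pk' M_k'p M_sc M_cs M_sf M_fs
    M_sk' M_ks F_cf F_fc M_ck' M_kc F_ff M_fk' M_kf M_kk M_k'k' M_kk'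
  have pureP1 : ((1 : R) - (p * q - p * q * p)) * (1 - p + (p - p * q * p)) = 1 - p * q := by
    simp only [mul_sub, sub_mul, mul_add, add_mul, mul_one, one_mul, mul_assoc,
      hp.1, hq.1, hpp, hqq]
    abel
  have pureP2 : ((1 : R) - p * q) * (1 - q * p) * (1 - p * q) =
      (1 - (p * q - p * q * p)) *
        (1 - p + (p - p * q * p) * (p - p * q * p) * (p - p * q * p)
          - (p - p * q * p) * (p - p * q * p) * (p * q - p * q * p)
          - (q * p - p * q * p) * (p - p * q * p)
          + (q * p - p * q * p) * (p * q - p * q * p)) := by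
    simp only [mul_sub, sub_mul, mul_add, add_mul, mul_one, one_mul, mul_assoc,
      hp.1, hq.1, hpp, hqq]
    abel
  have pureInv : ((1 : R) + (p * q - p * q * p)) * (1 - (p * q - p * q * p)) = 1 := by
    simp only [mul_sub, sub_mul, mul_add, add_mul, mul_one, one_mul, mul_assoc,
      hp.1, hq.1, hpp, hqq]
    abel
  set s_ : R := p - p * q * p with hs_def
  set k_ : R := p * q - p * q * p with hk_def
  set k'_ : R := q * p - p * q * p with hk'_def
  set c_ : R := p * t0 with hc_def
  set f_ : R := p * (S * t0) with hf_def
  set BL : R := 1 - p + s_ * s_ * s_ - s_ * s_ * k_ - k'_ * s_ + k'_ * k_ with hBL_def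
  set XL : R := c_ * c_ + c_ - f_ + c_ * k_ + k'_ * c_ + (1 - p - k'_ * ((p - f_) * k_))
    with hXL_def
  set WL : R := c_ * c_ + c_ - f_ + k'_ * (c_ * c_) + f_ * k_ + (1 - p - k'_ * ((p - f_) * k_))
    with hWL_def
  have h1 : (1 : R) - p * q = (1 - p * q) * star (1 - p * q) * (1 - p * q) * XL := by
    rw [hstarA]
    calc (1 : R) - p * q = (1 - k_) * (1 - p + s_) := pureP1.symm
      _ = (1 - k_) * (BL * XL) := by rw [← hBX]
      _ = ((1 - k_) * BL) * XL := by rw [← mul_assoc]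
      _ = ((1 - p * q) * (1 - q * p) * (1 - p * q)) * XL := by rw [← pureP2]
  have h2 : (1 : R) - p * q =
      ((1 - k_) * WL * (1 + k_)) * ((1 - p * q) * star (1 - p * q) * (1 - p * q)) := by
    rw [hstarA]
    have hc : ((1 - k_) * WL * (1 + k_)) * ((1 - p * q) * (1 - q * p) * (1 - p * q)) =
        1 - p * q := by
      calc ((1 - k_) * WL * (1 + k_)) * ((1 - p * q) * (1 - q * p) * (1 - p * q))
          = ((1 - k_) * WL * (1 + k_)) * ((1 - k_) * BL) := by rw [pureP2]
        _ = (1 - k_) * (WL * (((1 + k_) * (1 - k_)) * BL)) := by noncomm_ring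
        _ = (1 - k_) * (WL * (1 * BL)) := by rw [pureInv]
        _ = (1 - k_) * (WL * BL) := by rw [one_mul]
        _ = (1 - k_) * (1 - p + s_) := by rw [hWB]
        _ = 1 - p * q := pureP1
    exact hc.symm
  exact lemA h1 h2

end Glemmas
end MPTools

theorem stmt_0 {R : Type*} [Ring R] [StarRing R] (p q : R)
    (hp : IsProjection p) (hq : IsProjection q) :
    List.TFAE
      [IsMPInvertible (1 - p * q),
       IsMPInvertible (1 - p * q * p),
       IsMPInvertible (p - p * q * p),
       IsMPInvertible (1 - q * p),
       IsMPInvertible (1 - q * p * q),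
       IsMPInvertible (q - q * p * q)] := by
  have hstarA : star ((1 : R) - p * q) = 1 - q * p := by
    simp [star_sub, star_mul, star_one, hp.2, hq.2]
  have hstarA' : star ((1 : R) - q * p) = 1 - p * q := by
    simp [star_sub, star_mul, star_one, hp.2, hq.2]
  tfae_have 1 → 2 := G1 p q hp hq
  tfae_have 2 → 1 := G2 p q hp hq
  tfae_have 2 → 3 := G3a p q hp hq
  tfae_have 3 → 2 := G3b p q hp hq
  tfae_have 1 → 4 := by
    rintro ⟨b, hb⟩
    have h := mp_star hb
    rw [hstarA] at h
    exact ⟨star b, h⟩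
  tfae_have 4 → 1 := by
    rintro ⟨b, hb⟩
    have h := mp_star hb
    rw [hstarA'] at h
    exact ⟨star b, h⟩
  tfae_have 4 → 5 := G1 q p hq hp
  tfae_have 5 → 4 := G2 q p hq hp
  tfae_have 5 → 6 := G3a q p hq hp
  tfae_have 6 → 5 := G3b q p hq hp
  tfae_finish
end

section
/- Let R be a ring with involution, let p, q ∈ R be projections, and set a = pqp and b = pq(1-p). If p - pqp is Moore–Penrose invertible, then 1 - pq is Moore–Penrose invertible and (1 - pq)^† = [1 + b*(p - a)]·(p - a)^†·(1 + b) - b* - b*b + 1 - p. -/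
set_option maxHeartbeats 2000000 in
theorem stmt_2 {R : Type*} [Ring R] [StarRing R] (p q y : R)
    (hp : IsProjection p) (hq : IsProjection q)
    (hy : IsMPInv (p - p * q * p) y) :
    IsMPInv (1 - p * q)
      ((1 + star (p * q * (1 - p)) * (p - p * q * p)) * y * (1 + p * q * (1 - p))
        - star (p * q * (1 - p)) - star (p * q * (1 - p)) * (p * q * (1 - p)) + 1 - p) := by
  obtain ⟨hpp, hsp⟩ := hp
  obtain ⟨hqq, hsq⟩ := hq
  set n : R := p - p * q * p with hn
  clear_value n
  obtain ⟨h1, h2, h3, h4⟩ := hy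
  have hsn : star n = n := by rw [hn]; simp [hsp, hsq, mul_assoc]
  have k3 : star y * n = n * y := by rw [← h3, star_mul, hsn]
  have k4 : n * star y = y * n := by rw [← h4, star_mul, hsn]
  have a1 : y = y * star y * n := by
    calc y = y * n * y := h2.symm
    _ = y * (n * y) := by rw [mul_assoc]
    _ = y * (star y * n) := by rw [k3]
    _ = y * star y * n := by rw [mul_assoc]
  have a2 : y = y * y * n := by
    calc y = y * star y * n := a1
    _ = y * star y * (n * y * n) := by rw [h1]
    _ = y * star y * n * (y * n) := by noncomm_ring
    _ = y * (y * n) := by rw [← a1]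
    _ = y * y * n := by rw [mul_assoc]
  have hB : y = n * star y * star y := by
    calc y = y * y * n := a2
    _ = y * (y * n) := by rw [mul_assoc]
    _ = y * (n * star y) := by rw [k4]
    _ = y * n * star y := by rw [mul_assoc]
    _ = n * star y * star y := by rw [← k4]
  have ystar : star y = y := by
    calc star y = star (n * star y * star y) := by rw [← hB]
    _ = y * y * n := by simp [star_mul, hsn, mul_assoc]
    _ = y := a2.symm
  have comm : y * n = n * y := by rw [← k3, ystar]
  have hpp' : ∀ x : R, p * (p * x) = p * x := fun x => by rw [← mul_assoc, hpp]
  have hqq' : ∀ x : R, q * (q * x) = q * x := fun x => by rw [← mul_assoc, hqq]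
  have hpn : p * n = n := by rw [hn]; simp only [mul_sub, hpp, hpp', mul_assoc]
  have hnp : n * p = n := by rw [hn]; simp only [sub_mul, hpp, mul_assoc]
  have r3' : p * y = y := by
    calc p * y = p * (y * n * y) := by rw [h2]
    _ = p * (n * y * y) := by rw [comm]
    _ = p * n * (y * y) := by noncomm_ring
    _ = n * (y * y) := by rw [hpn]
    _ = n * y * y := by rw [mul_assoc]
    _ = y * n * y := by rw [← comm]
    _ = y := h2
  have r4' : y * p = y := by
    calc y * p = y * n * y * p := by rw [h2]
    _ = y * (n * y) * p := by rw [mul_assoc y n y]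
    _ = y * (y * n) * p := by rw [comm]
    _ = y * y * (n * p) := by noncomm_ring
    _ = y * y * n := by rw [hnp]
    _ = y := a2.symm
  have r3 : ∀ x : R, p * (y * x) = y * x := fun x => by rw [← mul_assoc, r3']
  have r4 : ∀ x : R, y * (p * x) = y * x := fun x => by rw [← mul_assoc, r4']
  have r5' : y * (q * p) = p * (q * y) := by
    have c1 : y * (p - p * q * p) = (p - p * q * p) * y := by rw [← hn]; exact comm
    simp only [mul_sub, sub_mul, mul_assoc, r3', r3, r4', r4] at c1
    rw [sub_right_inj] at c1
    exact c1
  have r5 : ∀ x : R, y * (q * (p * x)) = p * (q * (y * x)) := fun x => by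
    have h := congrArg (· * x) r5'
    simp only [mul_assoc] at h
    exact h
  have r6' : p * (q * (p * (q * y))) = p * (q * y) + p * (q * y) - y + p - p * (q * p) := by
    have e6 : (p - p * q * p) * y * (p - p * q * p) = p - p * q * p := by rw [← hn]; exact h1
    rw [← sub_eq_zero]
    rw [← sub_eq_zero] at e6
    calc p * (q * (p * (q * y))) - (p * (q * y) + p * (q * y) - y + p - p * (q * p))
        = (p - p * q * p) * y * (p - p * q * p) - (p - p * q * p) := by
          simp only [sub_mul, mul_sub, mul_assoc, hpp, hqq, hpp', hqq', r3', r3, r4', r4, r5', r5]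
          abel
      _ = 0 := e6
  have r6 : ∀ x : R, p * (q * (p * (q * (y * x)))) =
      p * (q * (y * x)) + p * (q * (y * x)) - y * x + p * x - p * (q * (p * x)) := fun x => by
    have h := congrArg (· * x) r6'
    simp only [add_mul, sub_mul, mul_assoc] at h
    exact h
  have r7' : p * (q * (y * y)) = y * y - y := by
    have e7 : y * (p - p * q * p) * y = y := by rw [← hn]; exact h2
    rw [← sub_eq_zero]
    rw [← sub_eq_zero] at e7
    calc p * (q * (y * y)) - (y * y - y) = -(y * (p - p * q * p) * y - y) := by
          simp only [sub_mul, mul_sub, mul_assoc, hpp, hqq, hpp', hqq', r3', r3, r4', r4, r5', r5]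
          abel
      _ = 0 := by rw [e7, neg_zero]
  have r7 : ∀ x : R, p * (q * (y * (y * x))) = y * (y * x) - y * x := fun x => by
    have h := congrArg (· * x) r7'
    simp only [sub_mul, mul_assoc] at h
    exact h
  have e2 : y * n * (y * n) = y * n := by rw [← mul_assoc, h2]
  have r8' : p * (q * (y * (q * y))) = y * (q * y) - p * (q * y) := by
    have e8 : y * (p - p * q * p) * (y * (p - p * q * p)) = y * (p - p * q * p) := by
      rw [← hn]; exact e2
    rw [← sub_eq_zero]
    rw [← sub_eq_zero] at e8
    calc p * (q * (y * (q * y))) - (y * (q * y) - p * (q * y))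
        = y * (p - p * q * p) * (y * (p - p * q * p)) - y * (p - p * q * p) := by
          simp only [sub_mul, mul_sub, mul_assoc, hpp, hqq, hpp', hqq', r3', r3, r4', r4, r5', r5,
            r7', r7]
          abel
      _ = 0 := e8
  have r8 : ∀ x : R, p * (q * (y * (q * (y * x)))) = y * (q * (y * x)) - p * (q * (y * x)) :=
    fun x => by
    have h := congrArg (· * x) r8'
    simp only [sub_mul, mul_assoc] at h
    exact h
  rw [hn]
  have hz : (1 + star (p * q * (1 - p)) * (p - p * q * p)) * y * (1 + p * q * (1 - p))
        - star (p * q * (1 - p)) - star (p * q * (1 - p)) * (p * q * (1 - p)) + 1 - p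
      = 1 - p + p * q - p * (q * y) + p * (q * (y * q)) - q * (p * q)
        - q * (p * (q * (y * q))) + q * (y * q) + y := by
    simp only [star_sub, star_add, star_mul, star_one, hsp, hsq, ystar]
    simp only [mul_add, add_mul, mul_sub, sub_mul, mul_one, one_mul, mul_assoc, hpp, hqq,
      hpp', hqq', r3', r3, r4', r4, r5', r5, r6', r6, r7', r7, r8', r8]
    abel
  have hcz : (1 - p * q) * (1 - p + p * q - p * (q * y) + p * (q * (y * q)) - q * (p * q)
        - q * (p * (q * (y * q))) + q * (y * q) + y)
      = 1 - q * (p * q) - q * (p * (q * (y * q))) + q * (y * q) := by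
    simp only [mul_add, add_mul, mul_sub, sub_mul, mul_one, one_mul, mul_assoc, hpp, hqq,
      hpp', hqq', r3', r3, r4', r4, r5', r5, r6', r6, r7', r7, r8', r8]
    abel
  have hzc : (1 - p + p * q - p * (q * y) + p * (q * (y * q)) - q * (p * q)
        - q * (p * (q * (y * q))) + q * (y * q) + y) * (1 - p * q)
      = 1 - p - p * (q * y) + y := by
    simp only [mul_add, add_mul, mul_sub, sub_mul, mul_one, one_mul, mul_assoc, hpp, hqq,
      hpp', hqq', r3', r3, r4', r4, r5', r5, r6', r6, r7', r7, r8', r8]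
    abel
  have g1 : (1 - q * (p * q) - q * (p * (q * (y * q))) + q * (y * q)) * (1 - p * q)
      = 1 - p * q := by
    simp only [mul_add, add_mul, mul_sub, sub_mul, mul_one, one_mul, mul_assoc, hpp, hqq,
      hpp', hqq', r3', r3, r4', r4, r5', r5, r6', r6, r7', r7, r8', r8]
    abel
  have g2 : (1 - p - p * (q * y) + y) * (1 - p + p * q - p * (q * y) + p * (q * (y * q))
        - q * (p * q) - q * (p * (q * (y * q))) + q * (y * q) + y)
      = 1 - p + p * q - p * (q * y) + p * (q * (y * q)) - q * (p * q)
        - q * (p * (q * (y * q))) + q * (y * q) + y := by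
    simp only [mul_add, add_mul, mul_sub, sub_mul, mul_one, one_mul, mul_assoc, hpp, hqq,
      hpp', hqq', r3', r3, r4', r4, r5', r5, r6', r6, r7', r7, r8', r8]
    abel
  have g3 : star (1 - q * (p * q) - q * (p * (q * (y * q))) + q * (y * q))
      = 1 - q * (p * q) - q * (p * (q * (y * q))) + q * (y * q) := by
    simp only [star_sub, star_add, star_mul, star_one, hsp, hsq, ystar]
    simp only [mul_add, add_mul, mul_sub, sub_mul, mul_one, one_mul, mul_assoc, hpp, hqq,
      hpp', hqq', r3', r3, r4', r4, r5', r5, r6', r6, r7', r7, r8', r8]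
  have g4 : star (1 - p - p * (q * y) + y) = 1 - p - p * (q * y) + y := by
    simp only [star_sub, star_add, star_mul, star_one, hsp, hsq, ystar]
    simp only [mul_add, add_mul, mul_sub, sub_mul, mul_one, one_mul, mul_assoc, hpp, hqq,
      hpp', hqq', r3', r3, r4', r4, r5', r5, r6', r6, r7', r7, r8', r8]
  refine ⟨?_, ?_, ?_, ?_⟩
  · rw [hz, hcz]; exact g1
  · rw [hz, hzc]; exact g2
  · rw [hz, hcz]; exact g3
  · rw [hz, hzc]; exact g4
end

section
/- Let R be a ring with involution and let p, q ∈ R be projections. If p - pqp is Moore–Penrose invertible, then 1 - pqp is Moore–Penrose invertible and (1 - pqp)^† = (p - pqp)^† + 1 - p. -/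
theorem stmt_3 {R : Type*} [Ring R] [StarRing R] (p q y : R)
    (hp : IsProjection p) (hq : IsProjection q)
    (hy : IsMPInv (p - p * q * p) y) :
    IsMPInv (1 - p * q * p) (y + 1 - p) := by
  obtain ⟨hp2, hps⟩ := hp
  obtain ⟨hq2, hqs⟩ := hq
  obtain ⟨h1, h2, h3, h4⟩ := hy
  set a := p - p * q * p with ha
  have has : star a = a := by
    rw [ha, star_sub, hps, star_mul, star_mul, hps, hqs, mul_assoc]
  have hpa : p * a = a := by
    rw [ha, mul_sub, hp2, ← mul_assoc, ← mul_assoc, hp2]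
  have hap : a * p = a := by
    rw [ha, sub_mul, mul_assoc, mul_assoc, hp2, ← mul_assoc]
  -- p * y = y
  have hyy : y = a * star y * y := by
    conv_lhs => rw [← h2, ← h4, star_mul, has]
  have hpy : p * y = y := by
    conv_lhs => rw [hyy, ← mul_assoc, ← mul_assoc, hpa, ← hyy]
  have hyy' : y = y * star y * a := by
    conv_lhs => rw [← h2, mul_assoc, ← h3, star_mul, has, ← mul_assoc]
  have hyp : y * p = y := by
    conv_lhs => rw [hyy', mul_assoc, mul_assoc, hap, ← mul_assoc, ← hyy']
  set u := (1 : R) - p with hu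
  have hu2 : u * u = u := by rw [hu, sub_mul, one_mul, mul_sub, mul_one, hp2]; abel
  have hus : star u = u := by rw [hu, star_sub, star_one, hps]
  have hau : a * u = 0 := by rw [hu, mul_sub, mul_one, hap, sub_self]
  have hua : u * a = 0 := by rw [hu, sub_mul, one_mul, hpa, sub_self]
  have hyu : y * u = 0 := by rw [hu, mul_sub, mul_one, hyp, sub_self]
  have huy : u * y = 0 := by rw [hu, sub_mul, one_mul, hpy, sub_self]
  have hb : (1 : R) - p * q * p = a + u := by rw [ha, hu]; abel
  have hb' : y + 1 - p = y + u := by rw [hu]; abel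
  rw [hb, hb']
  have key1 : (a + u) * (y + u) = a * y + u := by
    rw [mul_add, add_mul, add_mul, hau, huy, hu2]; abel
  have key2 : (y + u) * (a + u) = y * a + u := by
    rw [mul_add, add_mul, add_mul, hua, hyu, hu2]; abel
  refine ⟨?_, ?_, ?_, ?_⟩
  · rw [key1, add_mul, mul_add, mul_add, h1, hua, hu2, mul_assoc, hyu, mul_zero]
    abel
  · rw [key2, add_mul, mul_add, mul_add, h2, huy, hu2, mul_assoc, hau, mul_zero]
    abel
  · rw [key1, star_add, h3, hus]
  · rw [key2, star_add, h4, hus]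
end

section
/- Let R be a ring with involution and let p, q ∈ R be projections. If 1 - pqp is Moore–Penrose invertible, then p - pqp is Moore–Penrose invertible and (p - pqp)^† = p·(1 - pqp)^†. -/
theorem stmt_4 {R : Type*} [Ring R] [StarRing R] (p q y : R)
    (hp : IsProjection p) (hq : IsProjection q)
    (hy : IsMPInv (1 - p * q * p) y) :
    IsMPInv (p - p * q * p) (p * y) := by
  obtain ⟨hp2, hps⟩ := hp
  obtain ⟨hq2, hqs⟩ := hq
  obtain ⟨h1, h2, h3, h4⟩ := hy
  set a := 1 - p * q * p with ha
  have hppqp : p * (p * q * p) = p * q * p := by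
    rw [← mul_assoc, ← mul_assoc, hp2]
  have hpqpp : (p * q * p) * p = p * q * p := by
    rw [mul_assoc, hp2]
  have hsa : star a = a := by
    rw [ha, star_sub, star_one, star_mul, star_mul, hps, hqs, mul_assoc]
  have hpa : p * a = a * p := by
    rw [ha, mul_sub, sub_mul, mul_one, one_mul, hppqp, hpqpp]
  have hae : a * (1 - p) = 1 - p := by
    rw [ha, sub_mul, one_mul, mul_sub, mul_one, hpqpp, sub_self, sub_zero]
  have hea : (1 - p) * a = 1 - p := by
    rw [ha, mul_sub, mul_one, sub_mul, one_mul, hppqp, sub_self, sub_zero]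
  have hse : star (1 - p) = 1 - p := by rw [star_sub, star_one, hps]
  -- a * y * (1 - p) = 1 - p
  have s1 : a * y * (1 - p) = 1 - p := by
    calc a * y * (1 - p) = a * y * (a * (1 - p)) := by rw [hae]
      _ = (a * y * a) * (1 - p) := by rw [← mul_assoc (a * y) a (1 - p)]
      _ = a * (1 - p) := by rw [h1]
      _ = 1 - p := hae
  have s2 : (1 - p) * (a * y) = 1 - p := by
    have := congrArg star s1
    rwa [star_mul, h3, hse] at this
  have hey : (1 - p) * y = 1 - p := by
    calc (1 - p) * y = ((1 - p) * a) * y := by rw [hea]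
      _ = (1 - p) * (a * y) := by rw [mul_assoc]
      _ = 1 - p := s2
  have s3 : (1 - p) * (y * a) = 1 - p := by
    conv_lhs => rw [← hea]
    rw [mul_assoc, ← mul_assoc a y a, h1, hea]
  have s4 : (y * a) * (1 - p) = 1 - p := by
    have := congrArg star s3
    rwa [star_mul, h4, hse] at this
  have hye : y * (1 - p) = 1 - p := by
    calc y * (1 - p) = y * (a * (1 - p)) := by rw [hae]
      _ = (y * a) * (1 - p) := by rw [← mul_assoc]
      _ = 1 - p := s4
  have hpy : p * y = y * p := by
    have t1 : p * y = y - (1 - p) := by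
      have : y - p * y = 1 - p := by rw [← hey, sub_mul, one_mul]
      rw [← this]; abel
    have t2 : y * p = y - (1 - p) := by
      have : y - y * p = 1 - p := by rw [← hye, mul_sub, mul_one]
      rw [← this]; abel
    rw [t1, t2]
  have hb : p - p * q * p = p * a := by
    rw [ha, mul_sub, mul_one, hppqp]
  -- commutation of p with a*y and y*a
  have hpay : p * (a * y) = (a * y) * p := by
    rw [← mul_assoc p a y, hpa, mul_assoc a p y, hpy, ← mul_assoc a y p]
  have hpya : p * (y * a) = (y * a) * p := by
    rw [← mul_assoc p y a, hpy, mul_assoc y p a, hpa, ← mul_assoc y a p]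
  have K1 : (p * a) * (p * y) = p * (a * y) := by
    rw [mul_assoc p a (p * y), ← mul_assoc a p y, ← hpa, mul_assoc p a y,
      ← mul_assoc p p (a * y), hp2]
  have K2 : (p * y) * (p * a) = p * (y * a) := by
    rw [mul_assoc p y (p * a), ← mul_assoc y p a, ← hpy, mul_assoc p y a,
      ← mul_assoc p p (y * a), hp2]
  rw [hb]
  refine ⟨?_, ?_, ?_, ?_⟩
  · calc (p * a) * (p * y) * (p * a) = (p * (a * y)) * (p * a) := by rw [K1]
      _ = p * ((a * y) * (p * a)) := by rw [mul_assoc]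
      _ = p * ((a * y) * (a * p)) := by rw [hpa]
      _ = p * (((a * y) * a) * p) := by rw [← mul_assoc (a * y) a p]
      _ = p * (a * p) := by rw [h1]
      _ = p * (p * a) := by rw [hpa]
      _ = (p * p) * a := by rw [← mul_assoc]
      _ = p * a := by rw [hp2]
  · calc (p * y) * (p * a) * (p * y) = (p * (y * a)) * (p * y) := by rw [K2]
      _ = p * ((y * a) * (p * y)) := by rw [mul_assoc]
      _ = p * ((y * a) * (y * p)) := by rw [hpy]
      _ = p * (((y * a) * y) * p) := by rw [← mul_assoc (y * a) y p]
      _ = p * (y * p) := by rw [h2]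
      _ = p * (p * y) := by rw [hpy]
      _ = (p * p) * y := by rw [← mul_assoc]
      _ = p * y := by rw [hp2]
  · rw [K1, star_mul, h3, hps, ← hpay]
  · rw [K2, star_mul, h4, hps, ← hpya]
end

section
/- Let R be a *-reducing ring with involution and let p, q ∈ R be projections. Then the following ten conditions are equivalent: (1) 1 - pq is MP invertible; (2) 1 - pqp is MP invertible; (3) p - pqp is MP invertible; (4) p - pq is MP invertible; (5) p - qp is MP invertible; (6) 1 - qp is MP invertible; (7) 1 - qpq is MP invertible; (8) q - qpq is MP invertible; (9) q - qp is MP invertible; (10) q - pq is MP invertible. -/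
section aux
variable {R : Type*} [Ring R] [StarRing R]

lemma mp_unique_s5 {a b c : R} (hb : IsMPInv a b) (hc : IsMPInv a c) : b = c := by
  obtain ⟨b1, b2, b3, b4⟩ := hb
  obtain ⟨c1, c2, c3, c4⟩ := hc
  have hab : a * b = a * c := by
    have e1 : a * b = (a * b) * (a * c) := by
      conv_lhs => rw [← b3]
      calc star (a * b) = star ((a * c * a) * b) := by rw [c1]
        _ = star ((a * c) * (a * b)) := by rw [show a * c * a * b = (a * c) * (a * b) by noncomm_ring]
        _ = star (a * b) * star (a * c) := by rw [star_mul]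
        _ = (a * b) * (a * c) := by rw [b3, c3]
    calc a * b = (a * b) * (a * c) := e1
      _ = (a * b * a) * c := by noncomm_ring
      _ = a * c := by rw [b1]
  have hba : b * a = c * a := by
    have e1 : b * a = (c * a) * (b * a) := by
      conv_lhs => rw [← b4]
      calc star (b * a) = star (b * (a * c * a)) := by rw [c1]
        _ = star ((b * a) * (c * a)) := by rw [show b * (a * c * a) = (b * a) * (c * a) by noncomm_ring]
        _ = star (c * a) * star (b * a) := by rw [star_mul]
        _ = (c * a) * (b * a) := by rw [b4, c4]
    calc b * a = (c * a) * (b * a) := e1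
      _ = c * (a * b * a) := by noncomm_ring
      _ = c * a := by rw [b1]
  calc b = b * a * b := b2.symm
    _ = b * (a * c) := by rw [mul_assoc, ← hab]
    _ = (b * a) * c := by rw [mul_assoc]
    _ = (c * a) * c := by rw [hba]
    _ = c := by rw [c2]

lemma mp_sa_inv {a b : R} (ha : star a = a) (h : IsMPInv a b) : star b = b := by
  have h2 := mp_star h
  rw [ha] at h2
  exact mp_unique_s5 h2 h

lemma mp_mul_star {a b : R} (h : IsMPInv a b) :
    IsMPInv (a * star a) (star b * b) := by
  obtain ⟨h1, h2, h3, h4⟩ := h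
  have hba : star b * star a = star (a * b) := (star_mul _ _).symm
  have habab : (a * b) * (a * b) = a * b := by
    calc (a * b) * (a * b) = (a * b * a) * b := by noncomm_ring
      _ = a * b := by rw [h1]
  have hbaba : (b * a) * (b * a) = b * a := by
    calc (b * a) * (b * a) = (b * a * b) * a := by noncomm_ring
      _ = b * a := by rw [h2]
  refine ⟨?_, ?_, ?_, ?_⟩
  · -- a a* b* b a a* = a a*
    calc a * star a * (star b * b) * (a * star a)
        = a * (star a * star b) * (b * a) * star a := by noncomm_ring
      _ = a * star (b * a) * (b * a) * star a := by rw [← star_mul]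
      _ = a * (b * a) * (b * a) * star a := by rw [h4]
      _ = a * ((b * a) * (b * a)) * star a := by noncomm_ring
      _ = a * (b * a) * star a := by rw [hbaba]
      _ = (a * b * a) * star a := by noncomm_ring
      _ = a * star a := by rw [h1]
  · calc star b * b * (a * star a) * (star b * b)
        = star b * (b * a) * (star a * star b) * b := by noncomm_ring
      _ = star b * (b * a) * star (b * a) * b := by rw [← star_mul]
      _ = star b * (b * a) * (b * a) * b := by rw [h4]
      _ = star b * ((b * a) * (b * a)) * b := by noncomm_ring
      _ = star b * (b * a) * b := by rw [hbaba]
      _ = star b * (b * a * b) := by noncomm_ring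
      _ = star b * b := by rw [h2]
  · have key : a * star a * (star b * b) = a * b := by
      calc a * star a * (star b * b) = a * (star a * star b) * b := by noncomm_ring
        _ = a * star (b * a) * b := by rw [← star_mul]
        _ = a * (b * a) * b := by rw [h4]
        _ = (a * b) * (a * b) := by noncomm_ring
        _ = a * b := habab
    rw [key, h3]
  · have key : star b * b * (a * star a) = a * b := by
      calc star b * b * (a * star a) = star b * (b * a) * star a := by noncomm_ring
        _ = star b * star (b * a) * star a := by rw [h4]
        _ = star (b * a * b) * star a := by rw [← star_mul]
        _ = star b * star a := by rw [h2]
        _ = star (a * b) := (star_mul _ _).symm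
        _ = a * b := h3
    rw [key, h3]

lemma exists_norm (p q : R) (hp1 : p*p = p) (hp2 : star p = p)
    (hq1 : q*q = q) (hq2 : star q = q)
    (h : IsMPInvertible (p - p*q*p)) :
    ∃ f, IsMPInv (p - p*q*p) f ∧ star f = f ∧ p*f = f ∧ f*p = f ∧
      (p - p*q*p)*f = f*(p - p*q*p) := by
  obtain ⟨f₀, hf⟩ := h
  have hA2 : star (p - p*q*p) = p - p*q*p := by
    simp only [star_sub, star_mul, hp2, hq2, mul_assoc]
  have hf₀s : star f₀ = f₀ := mp_sa_inv hA2 hf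
  obtain ⟨h1, h2, h3, h4⟩ := hf
  have hAp : (p - p*q*p)*p = p - p*q*p := by
    simp only [sub_mul, mul_assoc, hp1]
  have hpA : p*(p - p*q*p) = p - p*q*p := by
    simp only [mul_sub, ← mul_assoc, hp1]
  have hpAp : p*(p - p*q*p)*p = p - p*q*p := by rw [hpA, hAp]
  have hcomm : (p - p*q*p)*f₀ = f₀*(p - p*q*p) := by
    conv_lhs => rw [← h3]
    rw [star_mul, hf₀s, hA2]
  have hAf : (p - p*q*p)*(p*f₀*p) = (p - p*q*p)*f₀ := by
    calc (p - p*q*p)*(p*f₀*p) = ((p - p*q*p)*p)*f₀*p := by noncomm_ring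
      _ = (p - p*q*p)*f₀*p := by rw [hAp]
      _ = f₀*(p - p*q*p)*p := by rw [hcomm]
      _ = f₀*(p - p*q*p) := by rw [mul_assoc, hAp]
      _ = (p - p*q*p)*f₀ := hcomm.symm
  have hfA : (p*f₀*p)*(p - p*q*p) = (p - p*q*p)*f₀ := by
    calc (p*f₀*p)*(p - p*q*p) = p*f₀*(p*(p - p*q*p)) := by noncomm_ring
      _ = p*f₀*(p - p*q*p) := by rw [hpA]
      _ = p*((p - p*q*p)*f₀) := by rw [mul_assoc, ← hcomm]
      _ = (p*(p - p*q*p))*f₀ := by rw [← mul_assoc]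
      _ = (p - p*q*p)*f₀ := by rw [hpA]
  refine ⟨p*f₀*p, ⟨?_, ?_, ?_, ?_⟩, ?_, ?_, ?_, ?_⟩
  · calc (p - p*q*p)*(p*f₀*p)*(p - p*q*p) = ((p - p*q*p)*(p*f₀*p))*(p - p*q*p) := rfl
      _ = ((p - p*q*p)*f₀)*(p - p*q*p) := by rw [hAf]
      _ = p - p*q*p := h1
  · calc (p*f₀*p)*(p - p*q*p)*(p*f₀*p)
        = p*f₀*(p*(p - p*q*p)*p)*f₀*p := by noncomm_ring
      _ = p*f₀*(p - p*q*p)*f₀*p := by rw [hpAp]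
      _ = p*(f₀*(p - p*q*p)*f₀)*p := by noncomm_ring
      _ = p*f₀*p := by rw [h2]
  · rw [hAf]; exact h3
  · rw [hfA]; exact h3
  · simp only [star_mul, hp2, hf₀s, mul_assoc]
  · calc p*(p*f₀*p) = (p*p)*f₀*p := by noncomm_ring
      _ = p*f₀*p := by rw [hp1]
  · calc (p*f₀*p)*p = p*f₀*(p*p) := by noncomm_ring
      _ = p*f₀*p := by rw [hp1]
  · rw [hAf, hfA]

lemma three_to_two' (p q f : R) (hp1 : p*p = p) (hp2 : star p = p)
    (hf : IsMPInv (p - p*q*p) f) (hfs : star f = f) (hpf : p*f = f) (hfp : f*p = f)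
    (hc : (p - p*q*p)*f = f*(p - p*q*p)) :
    IsMPInv (1 - p*q*p) (f + (1 - p)) := by
  obtain ⟨h1, h2, h3, h4⟩ := hf
  have hAu : (p - p*q*p)*(1-p) = 0 := by
    have : (p - p*q*p)*p = p - p*q*p := by simp only [sub_mul, mul_assoc, hp1]
    rw [mul_sub, mul_one, this, sub_self]
  have huA : (1-p)*(p - p*q*p) = 0 := by
    have : p*(p - p*q*p) = p - p*q*p := by simp only [mul_sub, ← mul_assoc, hp1]
    rw [sub_mul, one_mul, this, sub_self]
  have hfu : f*(1-p) = 0 := by rw [mul_sub, mul_one, hfp, sub_self]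
  have huf : (1-p)*f = 0 := by rw [sub_mul, one_mul, hpf, sub_self]
  have huu : (1-p)*(1-p) = (1-p) := by
    simp only [mul_sub, sub_mul, one_mul, mul_one, hp1]; noncomm_ring
  have hm : (1 : R) - p*q*p = (p - p*q*p) + (1 - p) := by noncomm_ring
  have hme : ((p - p*q*p) + (1-p)) * (f + (1-p)) = (p - p*q*p)*f + (1-p) := by
    rw [add_mul, mul_add, mul_add, hAu, huf, huu, add_zero, zero_add]
  have hem : (f + (1-p)) * ((p - p*q*p) + (1-p)) = f*(p - p*q*p) + (1-p) := by
    rw [add_mul, mul_add, mul_add, hfu, huA, huu, add_zero, zero_add]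
  rw [hm]
  refine ⟨?_, ?_, ?_, ?_⟩
  · rw [hme, add_mul, mul_add, mul_add]
    rw [mul_assoc (p - p*q*p) f (1-p), hfu, mul_zero, huA, huu, h1]
    noncomm_ring
  · rw [hem, add_mul, mul_add, mul_add]
    rw [mul_assoc f (p - p*q*p) (1-p), hAu, mul_zero, huf, huu, h2]
    noncomm_ring
  · rw [hme, star_add, h3, star_sub, star_one, hp2]
  · rw [hem, star_add, h4, star_sub, star_one, hp2]

-- (2) → (3)

lemma two_to_three (p q : R) (hp1 : p*p = p) (hp2 : star p = p)
    (h : IsMPInvertible (1 - p*q*p)) : IsMPInvertible (p - p*q*p) := by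
  obtain ⟨e, h1, h2, h3, h4⟩ := h
  have hpm : p*(1 - p*q*p) = p - p*q*p := by
    simp only [mul_sub, mul_one, ← mul_assoc, hp1]
  have hmp : (1 - p*q*p)*p = p - p*q*p := by
    simp only [sub_mul, one_mul, mul_assoc, hp1]
  have hum : (1-p)*(1 - p*q*p) = 1-p := by
    have h0 : (1-p)*(p*q*p) = 0 := by
      simp only [sub_mul, one_mul, ← mul_assoc, hp1, sub_self, zero_mul, mul_zero]
    rw [mul_sub, mul_one, h0, sub_zero]
  have hmu : (1 - p*q*p)*(1-p) = 1-p := by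
    have h0 : (p*q*p)*(1-p) = 0 := by
      simp only [mul_sub, mul_one, mul_assoc, hp1, sub_self, zero_mul, mul_zero]
    rw [sub_mul, one_mul, h0, sub_zero]
  -- G' := 1 - m*e₀ killed by (1-p) on both sides
  have hGm : (1 - (1 - p*q*p)*e) * (1 - p*q*p) = 0 := by
    rw [sub_mul, one_mul, mul_assoc, ← mul_assoc, h1, sub_self]
  have hG : (1 - (1 - p*q*p)*e) = (1 - (1 - p*q*p)*e) * (p*q*p) := by
    have := hGm
    calc 1 - (1 - p*q*p)*e = (1 - (1 - p*q*p)*e) * ((1 - p*q*p) + p*q*p) := by noncomm_ring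
      _ = 0 + (1 - (1 - p*q*p)*e) * (p*q*p) := by rw [mul_add, hGm]
      _ = (1 - (1 - p*q*p)*e) * (p*q*p) := by rw [zero_add]
  have hGu : (1 - (1 - p*q*p)*e) * (1-p) = 0 := by
    rw [hG]
    calc (1 - (1 - p*q*p)*e) * (p*q*p) * (1-p)
        = (1 - (1 - p*q*p)*e) * (p*q*(p*(1-p))) := by noncomm_ring
      _ = 0 := by rw [mul_sub, mul_one, hp1, sub_self]; simp
  have hGs : star (1 - (1 - p*q*p)*e) = 1 - (1 - p*q*p)*e := by
    rw [star_sub, star_one, h3]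
  have huG : (1-p) * (1 - (1 - p*q*p)*e) = 0 := by
    have := congrArg star hGu
    rw [star_mul, star_zero, hGs, star_sub, star_one, hp2] at this
    exact this
  -- so (1-p)*e = 1-p  and e*(1-p) = 1-p
  have hue : (1-p)*e = 1-p := by
    have h5 : (1-p)*((1 - p*q*p)*e) = 1-p := by
      have hx : (1-p)*(1 - (1 - p*q*p)*e) = (1-p) - (1-p)*((1 - p*q*p)*e) := by
        noncomm_ring
      rw [hx] at huG
      exact (sub_eq_zero.mp huG).symm
    calc (1-p)*e = ((1-p)*(1 - p*q*p))*e := by rw [hum]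
      _ = (1-p)*((1 - p*q*p)*e) := by rw [mul_assoc]
      _ = 1-p := h5
  -- symmetric: e*(1-p) = 1-p using G2 := 1 - e*m
  have hmG2 : (1 - p*q*p) * (1 - e*(1 - p*q*p)) = 0 := by
    rw [mul_sub, mul_one, ← mul_assoc, h1, sub_self]
  have hG2 : (1 - e*(1 - p*q*p)) = (p*q*p) * (1 - e*(1 - p*q*p)) := by
    calc 1 - e*(1 - p*q*p) = ((1 - p*q*p) + p*q*p) * (1 - e*(1 - p*q*p)) := by noncomm_ring
      _ = 0 + (p*q*p) * (1 - e*(1 - p*q*p)) := by rw [add_mul, hmG2]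
      _ = (p*q*p) * (1 - e*(1 - p*q*p)) := by rw [zero_add]
  have huG2 : (1-p) * (1 - e*(1 - p*q*p)) = 0 := by
    rw [hG2]
    have h0 : (1-p)*(p*q*p) = 0 := by
      simp only [sub_mul, one_mul, ← mul_assoc, hp1, sub_self, zero_mul, mul_zero]
    rw [← mul_assoc, h0, zero_mul]
  have hG2s : star (1 - e*(1 - p*q*p)) = 1 - e*(1 - p*q*p) := by
    rw [star_sub, star_one, h4]
  have hG2u : (1 - e*(1 - p*q*p)) * (1-p) = 0 := by
    have hc := congrArg star huG2
    rw [star_mul, star_zero, hG2s, star_sub, star_one, hp2] at hc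
    exact hc
  have heu : e*(1-p) = 1-p := by
    have h5 : (e*(1 - p*q*p))*(1-p) = 1-p := by
      have hx : (1 - e*(1 - p*q*p))*(1-p) = (1-p) - (e*(1 - p*q*p))*(1-p) := by
        noncomm_ring
      rw [hx] at hG2u
      exact (sub_eq_zero.mp hG2u).symm
    calc e*(1-p) = e*((1 - p*q*p)*(1-p)) := by rw [hmu]
      _ = (e*(1 - p*q*p))*(1-p) := by rw [← mul_assoc]
      _ = 1-p := h5
  -- f := e - (1-p)
  refine ⟨e - (1-p), ?_, ?_, ?_, ?_⟩
  · -- A * f * A = A, where A*f = A*e, A = p*m, fA = e*A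
    have hAf : (p - p*q*p)*(e - (1-p)) = (p - p*q*p)*e := by
      have hAu : (p - p*q*p)*(1-p) = 0 := by
        have hApp : (p - p*q*p)*p = p - p*q*p := by
          simp only [sub_mul, mul_assoc, hp1]
        rw [mul_sub, mul_one, hApp, sub_self]
      rw [mul_sub, hAu, sub_zero]
    rw [hAf]
    calc (p - p*q*p)*e*(p - p*q*p)
        = (p*(1 - p*q*p))*e*((1 - p*q*p)*p) := by rw [hpm, hmp]
      _ = p*((1 - p*q*p)*e*(1 - p*q*p))*p := by noncomm_ring
      _ = p*(1 - p*q*p)*p := by rw [h1]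
      _ = (p - p*q*p)*p := by rw [hpm]
      _ = p - p*q*p := by simp only [sub_mul, mul_assoc, hp1]
  · -- f * A * f = f
    have huA : (1-p)*(p - p*q*p) = 0 := by
      have hpA : p*(p - p*q*p) = p - p*q*p := by
        simp only [mul_sub, ← mul_assoc, hp1]
      rw [sub_mul, one_mul, hpA, sub_self]
    have hfA : (e - (1-p))*(p - p*q*p) = e*(p - p*q*p) := by
      rw [sub_mul, huA, sub_zero]
    have hAf : (p - p*q*p)*(e - (1-p)) = (p - p*q*p)*e := by
      have hAu : (p - p*q*p)*(1-p) = 0 := by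
        have hApp : (p - p*q*p)*p = p - p*q*p := by
          simp only [sub_mul, mul_assoc, hp1]
        rw [mul_sub, mul_one, hApp, sub_self]
      rw [mul_sub, hAu, sub_zero]
    rw [hfA]
    have hpe : p*e = e - (1-p) := by
      have : p*e = e - (1-p)*e := by noncomm_ring
      rw [this, hue]
    calc e*(p - p*q*p)*(e - (1-p))
        = e*((1 - p*q*p)*p)*(e - (1-p)) := by rw [hmp]
      _ = e*(1 - p*q*p)*(p*e) - e*(1 - p*q*p)*(p*(1-p)) := by noncomm_ring
      _ = e*(1 - p*q*p)*(e - (1-p)) - e*(1 - p*q*p)*(p*(1-p)) := by rw [hpe]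
      _ = e*(1 - p*q*p)*e - e*(1 - p*q*p)*(1-p) - e*(1 - p*q*p)*(p*(1-p)) := by
            noncomm_ring
      _ = e - e*((1 - p*q*p)*(1-p)) - e*((1 - p*q*p)*(p*(1-p)))  := by
            rw [h2]; noncomm_ring
      _ = e - (1-p) - e*((1 - p*q*p)*(p*(1-p))) := by rw [hmu, heu]
      _ = e - (1-p) := by
            have hpu : p*(1-p) = 0 := by rw [mul_sub, mul_one, hp1, sub_self]
            rw [hpu, mul_zero, mul_zero, sub_zero]
  · -- star (A*f) = A*f : A*f = p*(m*e), and p*(m*e) = m*e - (1-p) = (m*e)*p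
    have hAf : (p - p*q*p)*(e - (1-p)) = p*((1 - p*q*p)*e) := by
      have hAu : (p - p*q*p)*(1-p) = 0 := by
        have hApp : (p - p*q*p)*p = p - p*q*p := by
          simp only [sub_mul, mul_assoc, hp1]
        rw [mul_sub, mul_one, hApp, sub_self]
      rw [mul_sub, hAu, sub_zero, ← hpm, mul_assoc]
    have hpme : p*((1 - p*q*p)*e) = (1 - p*q*p)*e - (1-p) := by
      have hx : p*((1 - p*q*p)*e) = (1 - p*q*p)*e - (1-p)*((1 - p*q*p)*e) := by
        noncomm_ring
      have hy : (1-p)*((1 - p*q*p)*e) = 1-p := by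
        rw [← mul_assoc, hum, hue]
      rw [hx, hy]
    have hmep : ((1 - p*q*p)*e)*p = (1 - p*q*p)*e - (1-p) := by
      have hx : ((1 - p*q*p)*e)*p = (1 - p*q*p)*e - ((1 - p*q*p)*e)*(1-p) := by
        noncomm_ring
      have hy : ((1 - p*q*p)*e)*(1-p) = 1-p := by
        rw [mul_assoc, heu, hmu]
      rw [hx, hy]
    rw [hAf, star_mul, h3, hp2, hpme, hmep]
  · -- star (f*A) = f*A : f*A = (e*m)*p
    have hfA : (e - (1-p))*(p - p*q*p) = (e*(1 - p*q*p))*p := by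
      have huA : (1-p)*(p - p*q*p) = 0 := by
        have hpA : p*(p - p*q*p) = p - p*q*p := by
          simp only [mul_sub, ← mul_assoc, hp1]
        rw [sub_mul, one_mul, hpA, sub_self]
      rw [sub_mul, huA, sub_zero, ← hmp, ← mul_assoc]
    have hemp : (e*(1 - p*q*p))*p = e*(1 - p*q*p) - (1-p) := by
      have hx : (e*(1 - p*q*p))*p = e*(1 - p*q*p) - (e*(1 - p*q*p))*(1-p) := by
        noncomm_ring
      have hy : (e*(1 - p*q*p))*(1-p) = 1-p := by
        rw [mul_assoc, hmu, heu]
      rw [hx, hy]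
    have hpem : p*(e*(1 - p*q*p)) = e*(1 - p*q*p) - (1-p) := by
      have hx : p*(e*(1 - p*q*p)) = e*(1 - p*q*p) - (1-p)*(e*(1 - p*q*p)) := by
        noncomm_ring
      have hy : (1-p)*(e*(1 - p*q*p)) = 1-p := by
        rw [← mul_assoc, hue, hum]
      rw [hx, hy]
    rw [hfA, star_mul, h4, hp2, hemp, hpem]

lemma r_absorb (hR : IsStarReducing R) (p q f : R) (hp1 : p*p = p) (hp2 : star p = p)
    (hq1 : q*q = q) (hq2 : star q = q)
    (hf : IsMPInv (p - p*q*p) f) (hfs : star f = f) (hpf : p*f = f) (hfp : f*p = f) :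
    (p - (p - p*q*p)*f)*q = p - (p - p*q*p)*f ∧
      q*(p - (p - p*q*p)*f) = p - (p - p*q*p)*f := by
  obtain ⟨h1, h2, h3, h4⟩ := hf
  have hAp : (p - p*q*p)*p = p - p*q*p := by
    simp only [sub_mul, mul_assoc, hp1]
  have hpA : p*(p - p*q*p) = p - p*q*p := by
    simp only [mul_sub, ← mul_assoc, hp1]
  have hrs : star (p - (p - p*q*p)*f) = p - (p - p*q*p)*f := by
    rw [star_sub, hp2, h3]
  have hrp : (p - (p - p*q*p)*f)*p = p - (p - p*q*p)*f := by
    rw [sub_mul, hp1, mul_assoc, hfp]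
  have hpr : p*(p - (p - p*q*p)*f) = p - (p - p*q*p)*f := by
    rw [mul_sub, hp1, ← mul_assoc, hpA]
  have hrA : (p - (p - p*q*p)*f)*(p - p*q*p) = 0 := by
    rw [sub_mul, hpA, h1, sub_self]
  -- r*(1-q)*r = r*A*r = 0
  have key : star ((1-q)*(p - (p - p*q*p)*f)) * ((1-q)*(p - (p - p*q*p)*f)) = 0 := by
    rw [star_mul, hrs, star_sub, star_one, hq2]
    calc (p - (p - p*q*p)*f)*(1-q)*((1-q)*(p - (p - p*q*p)*f))
        = (p - (p - p*q*p)*f)*((1-q)*(1-q))*(p - (p - p*q*p)*f) := by noncomm_ring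
      _ = (p - (p - p*q*p)*f)*(1-q)*(p - (p - p*q*p)*f) := by
          have : (1-q)*(1-q) = (1:R)-q := by
            simp only [mul_sub, sub_mul, one_mul, mul_one, hq1]; noncomm_ring
          rw [this]
      _ = ((p - (p - p*q*p)*f)*p)*(1-q)*(p*(p - (p - p*q*p)*f)) := by rw [hrp, hpr]
      _ = (p - (p - p*q*p)*f)*(p*(1-q)*p)*(p - (p - p*q*p)*f) := by noncomm_ring
      _ = (p - (p - p*q*p)*f)*(p - p*q*p)*(p - (p - p*q*p)*f) := by
          have : p*(1-q)*p = p - p*q*p := by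
            simp only [mul_sub, sub_mul, one_mul, mul_one, hp1]
          rw [this]
      _ = 0 := by rw [hrA, zero_mul]
  have hqr0 : (1-q)*(p - (p - p*q*p)*f) = 0 := hR _ key
  have hqr : q*(p - (p - p*q*p)*f) = p - (p - p*q*p)*f := by
    have hx : (1-q)*(p - (p - p*q*p)*f)
        = (p - (p - p*q*p)*f) - q*(p - (p - p*q*p)*f) := by noncomm_ring
    rw [hx] at hqr0
    exact (sub_eq_zero.mp hqr0).symm
  have hrq : (p - (p - p*q*p)*f)*q = p - (p - p*q*p)*f := by
    have := congrArg star hqr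
    rw [star_mul, hrs, hq2] at this
    exact this
  exact ⟨hrq, hqr⟩

lemma three_to_four' (hR : IsStarReducing R) (p q f : R) (hp1 : p*p = p) (hp2 : star p = p)
    (hq1 : q*q = q) (hq2 : star q = q)
    (hf : IsMPInv (p - p*q*p) f) (hfs : star f = f) (hpf : p*f = f) (hfp : f*p = f) :
    IsMPInv (p - p*q) ((p - q*p)*f) := by
  obtain ⟨hrq, hqr⟩ := r_absorb hR p q f hp1 hp2 hq1 hq2 hf hfs hpf hfp
  obtain ⟨h1, h2, h3, h4⟩ := hf
  have huus : (p - p*q)*(p - q*p) = p - p*q*p := by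
    simp only [mul_sub, sub_mul, mul_assoc, hp1]
    rw [← mul_assoc q q p, hq1]
    noncomm_ring
  have hsu : star (p - p*q) = p - q*p := by
    rw [star_sub, star_mul, hp2, hq2]
  have huv : (p - p*q)*((p - q*p)*f) = (p - p*q*p)*f := by
    rw [← mul_assoc, huus]
  -- g*u = u where g = A*f :  g - g*q = p - p*q  ⟺ r*q = r
  have hgu : ((p - p*q*p)*f)*(p - p*q) = p - p*q := by
    have hgp : ((p - p*q*p)*f)*p = (p - p*q*p)*f := by rw [mul_assoc, hfp]
    have expand : ((p - p*q*p)*f)*(p - p*q)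
        = ((p - p*q*p)*f)*p - (((p - p*q*p)*f)*p)*q := by noncomm_ring
    rw [expand, hgp]
    -- goal : A*f - (A*f)*q = p - p*q
    have hr := hrq  -- (p - A*f)*q = p - A*f
    have hx : (p - (p - p*q*p)*f)*q = p*q - ((p - p*q*p)*f)*q := by noncomm_ring
    rw [hx] at hr
    -- p*q - (A*f)*q = p - A*f
    have : ((p - p*q*p)*f)*q = p*q - p + (p - p*q*p)*f := by
      have := congrArg (fun z => p*q - z) hr
      rw [sub_sub_cancel] at this
      rw [this]; noncomm_ring
    rw [this]; noncomm_ring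
  refine ⟨?_, ?_, ?_, ?_⟩
  · rw [huv, hgu]
  · calc (p - q*p)*f*(p - p*q)*((p - q*p)*f)
        = (p - q*p)*(f*((p - p*q)*(p - q*p))*f) := by noncomm_ring
      _ = (p - q*p)*(f*(p - p*q*p)*f) := by rw [huus]
      _ = (p - q*p)*f := by rw [h2]
  · rw [huv]; exact h3
  · calc star ((p - q*p)*f*(p - p*q))
        = star (p - p*q) * star f * star (p - q*p) := by
          rw [star_mul, star_mul, ← mul_assoc]
      _ = (p - q*p)*f*(p - p*q) := by
          rw [hsu, hfs]
          congr 1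
          rw [star_sub, star_mul, hp2, hq2]

-- (4) → (3) : via mp_mul_star
-- (3) → (1) : b := e + e*n

lemma three_to_one' (hR : IsStarReducing R) (p q f : R) (hp1 : p*p = p) (hp2 : star p = p)
    (hq1 : q*q = q) (hq2 : star q = q)
    (hf : IsMPInv (p - p*q*p) f) (hfs : star f = f) (hpf : p*f = f) (hfp : f*p = f)
    (hc : (p - p*q*p)*f = f*(p - p*q*p)) :
    IsMPInv (1 - p*q)
      ((f + (1-p)) + (f + (1-p))*(p*q - p*q*p)) := by
  obtain ⟨hrq, hqr⟩ := r_absorb hR p q f hp1 hp2 hq1 hq2 hf hfs hpf hfp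
  obtain ⟨h1, h2, h3, h4⟩ := hf
  have hpn : p*(p*q - p*q*p) = p*q - p*q*p := by
    simp only [mul_sub, ← mul_assoc, hp1]
  have hnp : (p*q - p*q*p)*p = 0 := by
    simp only [sub_mul, mul_assoc, hp1, sub_self]
  have hnf : (p*q - p*q*p)*f = 0 := by
    calc (p*q - p*q*p)*f = p*q*f - p*q*(p*f) := by noncomm_ring
      _ = 0 := by rw [hpf]; noncomm_ring
  have hnu : (p*q - p*q*p)*(1-p) = p*q - p*q*p := by
    rw [mul_sub, mul_one, hnp, sub_zero]
  have hne : (p*q - p*q*p)*(f + (1-p)) = p*q - p*q*p := by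
    rw [mul_add, hnf, hnu, zero_add]
  have hnn : (p*q - p*q*p)*(p*q - p*q*p) = 0 := by
    calc (p*q - p*q*p)*(p*q - p*q*p) = ((p*q - p*q*p)*p)*q - ((p*q - p*q*p)*p)*(q*p) := by
          noncomm_ring
      _ = 0 := by rw [hnp]; noncomm_ring
  have hnA : (p*q - p*q*p)*(p - p*q*p) = 0 := by
    calc (p*q - p*q*p)*(p - p*q*p) = ((p*q - p*q*p)*p) - ((p*q - p*q*p)*p)*(q*p) := by
          noncomm_ring
      _ = 0 := by rw [hnp]; noncomm_ring
  have hnm : (p*q - p*q*p)*(1 - p*q*p) = p*q - p*q*p := by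
    calc (p*q - p*q*p)*(1 - p*q*p) = (p*q - p*q*p) - ((p*q - p*q*p)*p)*(q*p) := by
          noncomm_ring
      _ = p*q - p*q*p := by rw [hnp]; noncomm_ring
  -- g*q = p*q - p + g  (from r*q = r)
  have hgq : ((p - p*q*p)*f)*q = p*q - p + (p - p*q*p)*f := by
    have hx : (p - (p - p*q*p)*f)*q = p*q - ((p - p*q*p)*f)*q := by noncomm_ring
    rw [hx] at hrq
    have := congrArg (fun z => p*q - z) hrq
    simp only [sub_sub_cancel] at this
    rw [this]; noncomm_ring
  have hru : (p - (p - p*q*p)*f)*(1-p) = 0 := by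
    have hrp : (p - (p - p*q*p)*f)*p = p - (p - p*q*p)*f := by
      rw [sub_mul, hp1, mul_assoc, hfp]
    rw [mul_sub, mul_one, hrp, sub_self]
  -- g*n = n
  have hgn : ((p - p*q*p)*f)*(p*q - p*q*p) = p*q - p*q*p := by
    have e1 : ((p - p*q*p)*f)*(p*q - p*q*p) = (((p - p*q*p)*f)*q)*(1-p) := by
      have hgp : ((p - p*q*p)*f)*p = (p - p*q*p)*f := by rw [mul_assoc, hfp]
      calc ((p - p*q*p)*f)*(p*q - p*q*p)
          = (((p - p*q*p)*f)*p)*q*(1-p) := by noncomm_ring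
        _ = (((p - p*q*p)*f)*q)*(1-p) := by rw [hgp]
    rw [e1, hgq]
    have e2 : (p*q - p + (p - p*q*p)*f)*(1-p)
        = (p*q - p*q*p) - (p - (p - p*q*p)*f)*(1-p) := by noncomm_ring
    rw [e2, hru, sub_zero]
  -- n*g = 0
  have hng : (p*q - p*q*p)*((p - p*q*p)*f) = 0 := by
    rw [← mul_assoc, hnA, zero_mul]
  -- basic e/h facts
  have hAu : (p - p*q*p)*(1-p) = 0 := by
    have hAp : (p - p*q*p)*p = p - p*q*p := by simp only [sub_mul, mul_assoc, hp1]
    rw [mul_sub, mul_one, hAp, sub_self]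
  have huA : (1-p)*(p - p*q*p) = 0 := by
    have hpA : p*(p - p*q*p) = p - p*q*p := by simp only [mul_sub, ← mul_assoc, hp1]
    rw [sub_mul, one_mul, hpA, sub_self]
  have hfu : f*(1-p) = 0 := by rw [mul_sub, mul_one, hfp, sub_self]
  have huf : (1-p)*f = 0 := by rw [sub_mul, one_mul, hpf, sub_self]
  have huu : (1-p)*(1-p) = (1:R)-p := by
    simp only [mul_sub, sub_mul, one_mul, mul_one, hp1]; noncomm_ring
  have hun : (1-p)*(p*q - p*q*p) = 0 := by
    rw [sub_mul, one_mul, hpn, sub_self]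
  -- m*e = h, e*m = h with h := A*f + (1-p)
  have hme : (1 - p*q*p)*(f + (1-p)) = (p - p*q*p)*f + (1-p) := by
    have hd : (1:R) - p*q*p = (p - p*q*p) + (1-p) := by noncomm_ring
    rw [hd, add_mul, mul_add, mul_add, hAu, huf, huu, add_zero, zero_add]
  have hem : (f + (1-p))*(1 - p*q*p) = (p - p*q*p)*f + (1-p) := by
    have hd : (1:R) - p*q*p = (p - p*q*p) + (1-p) := by noncomm_ring
    rw [hd, mul_add, add_mul, add_mul, hfu, huA, huu, add_zero, zero_add, hc]
  -- h*n = n, n*h = n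
  have hhn : ((p - p*q*p)*f + (1-p))*(p*q - p*q*p) = p*q - p*q*p := by
    rw [add_mul, hgn, hun, add_zero]
  have hnh : (p*q - p*q*p)*((p - p*q*p)*f + (1-p)) = p*q - p*q*p := by
    rw [mul_add, hng, hnu, zero_add]
  -- h*m = m, h*e = e
  have hgA : ((p - p*q*p)*f)*(p - p*q*p) = p - p*q*p := h1
  have hgu2 : ((p - p*q*p)*f)*(1-p) = 0 := by rw [mul_assoc, hfu, mul_zero]
  have hhm : ((p - p*q*p)*f + (1-p))*(1 - p*q*p) = 1 - p*q*p := by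
    have hd : (1:R) - p*q*p = (p - p*q*p) + (1-p) := by noncomm_ring
    rw [hd, add_mul, mul_add, mul_add, hgA, hgu2, huA, huu, add_zero, zero_add]
  have hgf : ((p - p*q*p)*f)*f = f := by
    rw [hc, mul_assoc]  -- f*(A*f) ... need f*A*f = f
    rw [← mul_assoc, h2]
  have hhe : ((p - p*q*p)*f + (1-p))*(f + (1-p)) = f + (1-p) := by
    rw [add_mul, mul_add, mul_add, hgf, hgu2, huf, huu, add_zero, zero_add]
  -- a = m - n
  have ha : (1:R) - p*q = (1 - p*q*p) - (p*q - p*q*p) := by noncomm_ring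
  -- star h = h
  have hhs : star ((p - p*q*p)*f + (1-p)) = (p - p*q*p)*f + (1-p) := by
    rw [star_add, h3, star_sub, star_one, hp2]
  -- now the axioms
  have hab : (1 - p*q)*((f + (1-p)) + (f + (1-p))*(p*q - p*q*p))
      = (p - p*q*p)*f + (1-p) := by
    rw [ha]
    have expand : ((1 - p*q*p) - (p*q - p*q*p))*((f + (1-p)) + (f + (1-p))*(p*q - p*q*p))
        = ((1 - p*q*p)*(f + (1-p)) - (p*q - p*q*p)*(f + (1-p)))
          + (((1 - p*q*p)*(f + (1-p)))*(p*q - p*q*p)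
             - ((p*q - p*q*p)*(f + (1-p)))*(p*q - p*q*p)) := by noncomm_ring
    rw [expand, hme, hne, hnn, hhn]
    noncomm_ring
  have hba : ((f + (1-p)) + (f + (1-p))*(p*q - p*q*p))*(1 - p*q)
      = (p - p*q*p)*f + (1-p) := by
    rw [ha]
    have expand : ((f + (1-p)) + (f + (1-p))*(p*q - p*q*p))*((1 - p*q*p) - (p*q - p*q*p))
        = ((f + (1-p))*(1 - p*q*p) - (f + (1-p))*(p*q - p*q*p))
          + ((f + (1-p))*((p*q - p*q*p)*(1 - p*q*p))
             - (f + (1-p))*((p*q - p*q*p)*(p*q - p*q*p))) := by noncomm_ring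
    rw [expand, hem, hnm, hnn, mul_zero]
    noncomm_ring
  refine ⟨?_, ?_, ?_, ?_⟩
  · rw [hab, ha]
    have expand : ((p - p*q*p)*f + (1-p))*((1 - p*q*p) - (p*q - p*q*p))
        = ((p - p*q*p)*f + (1-p))*(1 - p*q*p)
          - ((p - p*q*p)*f + (1-p))*(p*q - p*q*p) := by noncomm_ring
    rw [expand, hhm, hhn]
  · rw [hba]
    have expand : ((p - p*q*p)*f + (1-p))*((f + (1-p)) + (f + (1-p))*(p*q - p*q*p))
        = ((p - p*q*p)*f + (1-p))*(f + (1-p))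
          + (((p - p*q*p)*f + (1-p))*(f + (1-p)))*(p*q - p*q*p) := by noncomm_ring
    rw [expand, hhe]
  · rw [hab, hhs]
  · rw [hba, hhs]

lemma one_to_eight' (hR : IsStarReducing R) (p q b : R) (hp1 : p*p = p) (hp2 : star p = p)
    (hq1 : q*q = q) (hq2 : star q = q)
    (hb : IsMPInv (1 - p*q) b) :
    IsMPInv (q - q*p*q) (q*b) := by
  obtain ⟨h1, h2, h3, h4⟩ := hb
  -- trivial identities
  have hauq : (1 - p*q)*(1-q) = 1-q := by
    simp only [mul_sub, sub_mul, one_mul, mul_one, mul_assoc, hq1]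
    noncomm_ring
  have haq : (1 - p*q)*q = (1 - p*q) - (1-q) := by
    have hx : (1 - p*q)*q = (1 - p*q) - (1 - p*q)*(1-q) := by noncomm_ring
    rw [hx, hauq]
  -- G₁ := 1 - a*b facts
  have hG1a : (1 - (1 - p*q)*b)*(1 - p*q) = 0 := by
    rw [sub_mul, one_mul, h1, sub_self]
  have hG1s : star (1 - (1 - p*q)*b) = 1 - (1 - p*q)*b := by
    rw [star_sub, star_one, h3]
  have hG1pq : (1 - (1 - p*q)*b) = (1 - (1 - p*q)*b)*(p*q) := by
    calc 1 - (1 - p*q)*b = (1 - (1 - p*q)*b)*((1 - p*q) + p*q) := by noncomm_ring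
      _ = 0 + (1 - (1 - p*q)*b)*(p*q) := by rw [mul_add, hG1a]
      _ = (1 - (1 - p*q)*b)*(p*q) := by rw [zero_add]
  have hG1q : (1 - (1 - p*q)*b)*q = 1 - (1 - p*q)*b := by
    conv_lhs => rw [hG1pq]
    rw [mul_assoc (1 - (1 - p*q)*b) (p*q) q, mul_assoc p q q, hq1, ← hG1pq]
  have hqG1 : q*(1 - (1 - p*q)*b) = 1 - (1 - p*q)*b := by
    have := congrArg star hG1q
    rw [star_mul, hG1s, hq2] at this
    exact this
  -- p-absorption of G₁ via hR
  have hG1u0 : (1-p)*(1 - (1 - p*q)*b) = 0 := by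
    apply hR
    have hsx : star ((1-p)*(1 - (1 - p*q)*b)) = (1 - (1 - p*q)*b)*(1-p) := by
      rw [star_mul, hG1s, star_sub, star_one, hp2]
    rw [hsx]
    -- G₁*(1-p)*(1-p)*G₁ = G₁*(q*(1-p)*q)*G₁ = G₁*(q - q*p*q)*G₁ = 0
    have huu : ((1:R)-p)*(1-p) = 1-p := by
      simp only [mul_sub, sub_mul, one_mul, mul_one, hp1]; noncomm_ring
    calc (1 - (1 - p*q)*b)*(1-p)*((1-p)*(1 - (1 - p*q)*b))
        = (1 - (1 - p*q)*b)*((1-p)*(1-p))*(1 - (1 - p*q)*b) := by noncomm_ring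
      _ = (1 - (1 - p*q)*b)*(1-p)*(1 - (1 - p*q)*b) := by rw [huu]
      _ = ((1 - (1 - p*q)*b)*q)*(1-p)*(q*(1 - (1 - p*q)*b)) := by rw [hG1q, hqG1]
      _ = (1 - (1 - p*q)*b)*(q*(1-p)*q)*(1 - (1 - p*q)*b) := by noncomm_ring
      _ = (1 - (1 - p*q)*b)*(q*(1 - p*q))*(1 - (1 - p*q)*b) := by
            have : q*(1-p)*q = q*(1 - p*q) := by
              simp only [mul_sub, sub_mul, one_mul, mul_one, mul_assoc, hq1]
            rw [this]
      _ = 0 := by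
            rw [show (1 - (1 - p*q)*b)*(q*(1 - p*q)) = ((1 - (1 - p*q)*b)*q)*(1 - p*q)
                  from by rw [mul_assoc], hG1q, hG1a, zero_mul]
  -- G₂ := 1 - b*a facts
  have haG2 : (1 - p*q)*(1 - b*(1 - p*q)) = 0 := by
    rw [mul_sub, mul_one, ← mul_assoc, h1, sub_self]
  have hG2s : star (1 - b*(1 - p*q)) = 1 - b*(1 - p*q) := by
    rw [star_sub, star_one, h4]
  have hG2pq : (1 - b*(1 - p*q)) = (p*q)*(1 - b*(1 - p*q)) := by
    calc 1 - b*(1 - p*q) = ((1 - p*q) + p*q)*(1 - b*(1 - p*q)) := by noncomm_ring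
      _ = 0 + (p*q)*(1 - b*(1 - p*q)) := by rw [add_mul, haG2]
      _ = (p*q)*(1 - b*(1 - p*q)) := by rw [zero_add]
  have hpG2 : p*(1 - b*(1 - p*q)) = 1 - b*(1 - p*q) := by
    conv_lhs => rw [hG2pq]
    rw [← mul_assoc, ← mul_assoc, hp1, ← hG2pq]
  have hG2p : (1 - b*(1 - p*q))*p = 1 - b*(1 - p*q) := by
    have := congrArg star hpG2
    rw [star_mul, hG2s, hp2] at this
    exact this
  have hG2as : (1 - b*(1 - p*q))*(1 - q*p) = 0 := by
    have := congrArg star haG2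
    rw [star_mul, hG2s, star_sub, star_one, star_mul, hp2, hq2, star_zero] at this
    exact this
  -- q-absorption of G₂ via hR
  have hG2u0 : (1-q)*(1 - b*(1 - p*q)) = 0 := by
    apply hR
    have hsx : star ((1-q)*(1 - b*(1 - p*q))) = (1 - b*(1 - p*q))*(1-q) := by
      rw [star_mul, hG2s, star_sub, star_one, hq2]
    rw [hsx]
    have huu : ((1:R)-q)*(1-q) = 1-q := by
      simp only [mul_sub, sub_mul, one_mul, mul_one, hq1]; noncomm_ring
    calc (1 - b*(1 - p*q))*(1-q)*((1-q)*(1 - b*(1 - p*q)))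
        = (1 - b*(1 - p*q))*((1-q)*(1-q))*(1 - b*(1 - p*q)) := by noncomm_ring
      _ = (1 - b*(1 - p*q))*(1-q)*(1 - b*(1 - p*q)) := by rw [huu]
      _ = ((1 - b*(1 - p*q))*p)*(1-q)*(p*(1 - b*(1 - p*q))) := by rw [hG2p, hpG2]
      _ = (1 - b*(1 - p*q))*(p*(1-q)*p)*(1 - b*(1 - p*q)) := by noncomm_ring
      _ = (1 - b*(1 - p*q))*(p*(1 - q*p))*(1 - b*(1 - p*q)) := by
            have : p*(1-q)*p = p*(1 - q*p) := by
              simp only [mul_sub, sub_mul, one_mul, mul_one, mul_assoc, hp1]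
            rw [this]
      _ = 0 := by
            rw [show (1 - b*(1 - p*q))*(p*(1 - q*p)) = ((1 - b*(1 - p*q))*p)*(1 - q*p)
                  from by rw [mul_assoc], hG2p, hG2as, zero_mul]
  -- K*q = q*K etc.
  have hqG2 : q*(1 - b*(1 - p*q)) = 1 - b*(1 - p*q) := by
    have hx : (1-q)*(1 - b*(1 - p*q))
        = (1 - b*(1 - p*q)) - q*(1 - b*(1 - p*q)) := by noncomm_ring
    rw [hx] at hG2u0
    exact (sub_eq_zero.mp hG2u0).symm
  have hG2q : (1 - b*(1 - p*q))*q = 1 - b*(1 - p*q) := by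
    have := congrArg star hqG2
    rw [star_mul, hG2s, hq2] at this
    exact this
  have hqG1' : q*(1 - (1 - p*q)*b) = 1 - (1 - p*q)*b := hqG1
  -- b*q = b - (1-q) : from b*(1-q) = 1-q
  have hbuq : b*(1-q) = 1-q := by
    calc b*(1-q) = b*((1 - p*q)*(1-q)) := by rw [hauq]
      _ = (b*(1 - p*q))*(1-q) := by rw [← mul_assoc]
      _ = (1-q) - (1 - b*(1 - p*q))*(1-q) := by noncomm_ring
      _ = (1-q) - ((1 - b*(1 - p*q)) - (1 - b*(1 - p*q))*q) := by noncomm_ring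
      _ = 1-q := by rw [hG2q, sub_self, sub_zero]
  have hbq : b*q = b - (1-q) := by
    have hx : b*q = b - b*(1-q) := by noncomm_ring
    rw [hx, hbuq]
  -- B*g = q - G₁ ,  g*B = q - G₂
  have hB : q - q*p*q = q*(1 - p*q) := by noncomm_ring
  have hBg : (q - q*p*q)*(q*b) = q - (1 - (1 - p*q)*b) := by
    calc (q - q*p*q)*(q*b) = q*((1 - p*q)*q)*b := by noncomm_ring
      _ = q*((1 - p*q) - (1-q))*b := by rw [haq]
      _ = q*((1 - p*q)*b) - (q - q*q)*b := by noncomm_ring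
      _ = q*((1 - p*q)*b) := by rw [hq1, sub_self, zero_mul, sub_zero]
      _ = q - q*(1 - (1 - p*q)*b) := by noncomm_ring
      _ = q - (1 - (1 - p*q)*b) := by rw [hqG1]
  have hgB : (q*b)*(q - q*p*q) = q - (1 - b*(1 - p*q)) := by
    calc (q*b)*(q - q*p*q) = q*(b*q)*(1 - p*q) := by noncomm_ring
      _ = q*(b - (1-q))*(1 - p*q) := by rw [hbq]
      _ = q*(b*(1 - p*q)) - (q - q*q)*(1 - p*q) := by noncomm_ring
      _ = q*(b*(1 - p*q)) := by rw [hq1, sub_self, zero_mul, sub_zero]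
      _ = q - q*(1 - b*(1 - p*q)) := by noncomm_ring
      _ = q - (1 - b*(1 - p*q)) := by rw [hqG2]
  refine ⟨?_, ?_, ?_, ?_⟩
  · rw [hBg]
    calc (q - (1 - (1 - p*q)*b))*(q - q*p*q)
        = (q*q)*(1 - p*q) - ((1 - (1 - p*q)*b)*q)*(1 - p*q) := by noncomm_ring
      _ = q*(1 - p*q) - ((1 - (1 - p*q)*b))*(1 - p*q) := by rw [hq1, hG1q]
      _ = q*(1 - p*q) := by rw [hG1a, sub_zero]
      _ = q - q*p*q := hB.symm
  · rw [hgB]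
    calc (q - (1 - b*(1 - p*q)))*(q*b)
        = (q*q)*b - ((1 - b*(1 - p*q))*q)*b := by noncomm_ring
      _ = q*b - (1 - b*(1 - p*q))*b := by rw [hq1, hG2q]
      _ = q*b := by
          have : (1 - b*(1 - p*q))*b = 0 := by
            rw [sub_mul, one_mul, h2, sub_self]
          rw [this, sub_zero]
  · rw [hBg, star_sub, hq2, hG1s]
  · rw [hgB, star_sub, hq2, hG2s]

lemma mpi_star {a : R} (h : IsMPInvertible a) : IsMPInvertible (star a) := by
  obtain ⟨b, hb⟩ := h
  exact ⟨star b, mp_star hb⟩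

-- (3) → (1)
lemma three_to_one (hR : IsStarReducing R) (p q : R) (hp1 : p*p = p) (hp2 : star p = p)
    (hq1 : q*q = q) (hq2 : star q = q)
    (h : IsMPInvertible (p - p*q*p)) : IsMPInvertible (1 - p*q) := by
  obtain ⟨f, hf, hfs, hpf, hfp, hc⟩ := exists_norm p q hp1 hp2 hq1 hq2 h
  exact ⟨_, three_to_one' hR p q f hp1 hp2 hq1 hq2 hf hfs hpf hfp hc⟩

-- (1) → (8)
lemma one_to_eight (hR : IsStarReducing R) (p q : R) (hp1 : p*p = p) (hp2 : star p = p)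
    (hq1 : q*q = q) (hq2 : star q = q)
    (h : IsMPInvertible (1 - p*q)) : IsMPInvertible (q - q*p*q) := by
  obtain ⟨b, hb⟩ := h
  exact ⟨_, one_to_eight' hR p q b hp1 hp2 hq1 hq2 hb⟩

-- (3) → (2)
lemma three_to_two (p q : R) (hp1 : p*p = p) (hp2 : star p = p)
    (hq1 : q*q = q) (hq2 : star q = q)
    (h : IsMPInvertible (p - p*q*p)) : IsMPInvertible (1 - p*q*p) := by
  obtain ⟨f, hf, hfs, hpf, hfp, hc⟩ := exists_norm p q hp1 hp2 hq1 hq2 h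
  exact ⟨_, three_to_two' p q f hp1 hp2 hf hfs hpf hfp hc⟩

-- (3) → (4)
lemma three_to_four (hR : IsStarReducing R) (p q : R) (hp1 : p*p = p) (hp2 : star p = p)
    (hq1 : q*q = q) (hq2 : star q = q)
    (h : IsMPInvertible (p - p*q*p)) : IsMPInvertible (p - p*q) := by
  obtain ⟨f, hf, hfs, hpf, hfp, hc⟩ := exists_norm p q hp1 hp2 hq1 hq2 h
  exact ⟨_, three_to_four' hR p q f hp1 hp2 hq1 hq2 hf hfs hpf hfp⟩

-- (4) → (3)
lemma four_to_three (p q : R) (hp1 : p*p = p) (hp2 : star p = p)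
    (hq1 : q*q = q) (hq2 : star q = q)
    (h : IsMPInvertible (p - p*q)) : IsMPInvertible (p - p*q*p) := by
  obtain ⟨b, hb⟩ := h
  have key := mp_mul_star hb
  have hid : (p - p*q) * star (p - p*q) = p - p*q*p := by
    rw [star_sub, star_mul, hp2, hq2]
    simp only [mul_sub, sub_mul, mul_assoc, hp1]
    rw [← mul_assoc q q p, hq1]
    noncomm_ring
  rw [hid] at key
  exact ⟨_, key⟩

end aux

theorem stmt_5 {R : Type*} [Ring R] [StarRing R] (hR : IsStarReducing R) (p q : R)
    (hp : IsProjection p) (hq : IsProjection q) :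
    List.TFAE
      [IsMPInvertible (1 - p * q),
       IsMPInvertible (1 - p * q * p),
       IsMPInvertible (p - p * q * p),
       IsMPInvertible (p - p * q),
       IsMPInvertible (p - q * p),
       IsMPInvertible (1 - q * p),
       IsMPInvertible (1 - q * p * q),
       IsMPInvertible (q - q * p * q),
       IsMPInvertible (q - q * p),
       IsMPInvertible (q - p * q)] := by
  obtain ⟨hp1, hp2⟩ := hp
  obtain ⟨hq1, hq2⟩ := hq
  have hs1 : star ((1:R) - p*q) = 1 - q*p := by
    rw [star_sub, star_one, star_mul, hp2, hq2]
  have hs6 : star ((1:R) - q*p) = 1 - p*q := by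
    rw [star_sub, star_one, star_mul, hp2, hq2]
  have hs4 : star (p - p*q) = p - q*p := by
    rw [star_sub, star_mul, hp2, hq2]
  have hs5 : star (p - q*p) = p - p*q := by
    rw [star_sub, star_mul, hp2, hq2]
  have hs9 : star (q - q*p) = q - p*q := by
    rw [star_sub, star_mul, hp2, hq2]
  have hs10 : star (q - p*q) = q - q*p := by
    rw [star_sub, star_mul, hp2, hq2]
  tfae_have 1 → 6 := by
    intro h; have := mpi_star h; rwa [hs1] at this
  tfae_have 6 → 1 := by
    intro h; have := mpi_star h; rwa [hs6] at this
  tfae_have 1 → 8 := one_to_eight hR p q hp1 hp2 hq1 hq2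
  tfae_have 8 → 6 := three_to_one hR q p hq1 hq2 hp1 hp2
  tfae_have 6 → 3 := one_to_eight hR q p hq1 hq2 hp1 hp2
  tfae_have 3 → 1 := three_to_one hR p q hp1 hp2 hq1 hq2
  tfae_have 3 → 2 := three_to_two p q hp1 hp2 hq1 hq2
  tfae_have 2 → 3 := two_to_three p q hp1 hp2
  tfae_have 8 → 7 := three_to_two q p hq1 hq2 hp1 hp2
  tfae_have 7 → 8 := two_to_three q p hq1 hq2
  tfae_have 3 → 4 := three_to_four hR p q hp1 hp2 hq1 hq2
  tfae_have 4 → 3 := four_to_three p q hp1 hp2 hq1 hq2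
  tfae_have 8 → 9 := three_to_four hR q p hq1 hq2 hp1 hp2
  tfae_have 9 → 8 := four_to_three q p hq1 hq2 hp1 hp2
  tfae_have 4 → 5 := by
    intro h; have := mpi_star h; rwa [hs4] at this
  tfae_have 5 → 4 := by
    intro h; have := mpi_star h; rwa [hs5] at this
  tfae_have 9 → 10 := by
    intro h; have := mpi_star h; rwa [hs9] at this
  tfae_have 10 → 9 := by
    intro h; have := mpi_star h; rwa [hs10] at this
  tfae_finish
end

section
/- Let R be a *-reducing ring with involution and let p, q ∈ R be projections. If 1 - pq and p - pqp are both Moore–Penrose invertible, then (p - pqp)^† = (1 - pq)^†·p. -/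
/-- Moore–Penrose inverses are unique. -/
theorem mp_unique_aux {R : Type*} [Ring R] [StarRing R] {b y c : R}
    (hy : IsMPInv b y) (hc : IsMPInv b c) : y = c := by
  obtain ⟨hy1, hy2, hy3, hy4⟩ := hy
  obtain ⟨hc1, hc2, hc3, hc4⟩ := hc
  have st1 : star b = star b * (b * c) := by
    conv_lhs => rw [← hc1]
    rw [star_mul, hc3]
  have st2 : star b = (c * b) * star b := by
    conv_lhs => rw [← hc1, mul_assoc]
    rw [star_mul, hc4]
  have st3 : y * b = c * b := by
    calc y * b = star (y * b) := hy4.symm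
      _ = star b * star y := star_mul y b
      _ = ((c * b) * star b) * star y := by rw [← st2]
      _ = (c * b) * (star b * star y) := mul_assoc _ _ _
      _ = (c * b) * star (y * b) := by rw [← star_mul]
      _ = (c * b) * (y * b) := by rw [hy4]
      _ = c * (b * y * b) := by rw [mul_assoc, ← mul_assoc b y b]
      _ = c * b := by rw [hy1]
  have st4 : b * y = b * c := by
    calc b * y = star (b * y) := hy3.symm
      _ = star y * star b := star_mul b y
      _ = star y * (star b * (b * c)) := by rw [← st1]
      _ = (star y * star b) * (b * c) := (mul_assoc _ _ _).symm
      _ = star (b * y) * (b * c) := by rw [← star_mul]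
      _ = (b * y) * (b * c) := by rw [hy3]
      _ = b * ((y * b) * c) := by rw [mul_assoc, ← mul_assoc y b c]
      _ = b * ((c * b) * c) := by rw [st3]
      _ = b * c := by rw [hc2]
  calc y = y * b * y := hy2.symm
    _ = y * (b * y) := mul_assoc _ _ _
    _ = y * (b * c) := by rw [st4]
    _ = (y * b) * c := (mul_assoc _ _ _).symm
    _ = (c * b) * c := by rw [st3]
    _ = c := hc2

theorem stmt_6 {R : Type*} [Ring R] [StarRing R] (hR : IsStarReducing R) (p q x y : R)
    (hp : IsProjection p) (hq : IsProjection q)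
    (hx : IsMPInv (1 - p * q) x) (hy : IsMPInv (p - p * q * p) y) :
    y = x * p := by
  obtain ⟨hp1, hp2⟩ := hp
  obtain ⟨hq1, hq2⟩ := hq
  obtain ⟨hx1, hx2, hx3, hx4⟩ := hx
  obtain ⟨hy1, hy2, hy3, hy4⟩ := hy
  set a := 1 - p * q with ha
  set b := p - p * q * p with hb
  clear_value a b
  -- basic facts
  have hsb : star b = b := by
    rw [hb]; simp [star_sub, star_mul, hp2, hq2, mul_assoc]
  have hab : a * p = b := by rw [ha, hb]; noncomm_ring
  have hpb : p * b = b := by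
    rw [hb]; simp only [mul_sub, ← mul_assoc, hp1]
  have hbp : b * p = b := by
    rw [hb, sub_mul, hp1, mul_assoc, hp1]
  have hpa : p * a = p + a - 1 := by
    rw [ha]; simp only [mul_sub, mul_one, ← mul_assoc, hp1]; abel
  -- y = y p and y = p y
  have key1 : y * star y * b = y := by
    calc y * star y * b = y * (star y * star b) := by rw [hsb, mul_assoc]
      _ = y * star (b * y) := by rw [← star_mul]
      _ = y * (b * y) := by rw [hy3]
      _ = y := by rw [← mul_assoc, hy2]
  have hyp' : y * p = y := by
    calc y * p = y * star y * b * p := by rw [key1]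
      _ = y * star y * (b * p) := by rw [mul_assoc]
      _ = y * star y * b := by rw [hbp]
      _ = y := key1
  have key2 : b * star y * y = y := by
    calc b * star y * y = star (y * b) * y := by rw [star_mul, hsb]
      _ = y * b * y := by rw [hy4]
      _ = y := hy2
  have hpy : p * y = y := by
    calc p * y = p * (b * star y * y) := by rw [key2]
      _ = p * (b * star y) * y := by rw [← mul_assoc]
      _ = p * b * star y * y := by rw [← mul_assoc]
      _ = b * star y * y := by rw [hpb]
      _ = y := key2
  -- g = b y
  set g := b * y with hgd
  clear_value g
  have hgg : g * g = g := by
    calc g * g = g * (b * y) := by rw [hgd]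
      _ = (g * b) * y := by rw [← mul_assoc]
      _ = b * y := by rw [hy1]
      _ = g := by rw [← hgd]
  have hpg : p * g = g := by rw [hgd, ← mul_assoc, hpb]
  have hgp : g * p = g := by rw [hgd, mul_assoc, hyp']
  -- r = p - g
  set r := p - g with hrd
  clear_value r
  have hrs : star r = r := by rw [hrd, star_sub, hp2, hy3]
  have hrp : r * p = r := by rw [hrd, sub_mul, hp1, hgp]
  have hpr : p * r = r := by rw [hrd, mul_sub, hp1, hpg]
  have hrr : r * r = r := by
    rw [hrd, sub_mul, mul_sub, mul_sub, hp1, hpg, hgp, hgg]; abel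
  have hrb : r * b = 0 := by rw [hrd, sub_mul, hpb, hy1, sub_self]
  have hbr : b * r = 0 := by
    have h := congrArg star hrb
    rwa [star_mul, hrs, hsb, star_zero] at h
  have hspqp : star (p * q * p) = p * q * p := by
    simp [star_mul, hp2, hq2, mul_assoc]
  have hrpqp : r * (p * q * p) = r := by
    have h1 : r * p - r * (p * q * p) = 0 := by rw [← mul_sub, ← hb, hrb]
    have h2 : r * p = r * (p * q * p) := sub_eq_zero.mp h1
    rw [← h2, hrp]
  have hpqpr : p * q * p * r = r := by
    have h := congrArg star hrpqp
    rwa [star_mul, hspqp, hrs] at h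
  have hpqr : p * q * r = r := by
    calc p * q * r = p * q * (p * r) := by rw [hpr]
      _ = p * q * p * r := by rw [← mul_assoc]
      _ = r := hpqpr
  have hrqr : r * q * r = r := by
    calc r * q * r = ((r * p) * q) * r := by rw [hrp]
      _ = r * ((p * q) * r) := by rw [mul_assoc r p q, mul_assoc r (p * q) r]
      _ = r * r := by rw [hpqr]
      _ = r := hrr
  have hqr : q * r = r := by
    have e1 : r * (q * r) = r := by rw [← mul_assoc]; exact hrqr
    have e2 : (r * q) * (q * r) = r := by
      rw [← mul_assoc, mul_assoc r q q, hq1]; exact hrqr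
    have h3 : (r - r * q) * (r - q * r) = 0 := by
      rw [sub_mul, mul_sub, mul_sub, hrr, e1, hrqr, e2]; abel
    have hst : star (r - q * r) = r - r * q := by
      rw [star_sub, hrs, star_mul, hq2, hrs]
    have h0 : r - q * r = 0 := hR _ (by rw [hst]; exact h3)
    exact (sub_eq_zero.mp h0).symm
  have hrq : r * q = r := by
    have h := congrArg star hqr
    rwa [star_mul, hq2, hrs] at h
  -- K0 : g q = g + p q - p
  have hK0 : g * q = g + p * q - p := by
    have h : p * q - g * q = p - g := by rw [← sub_mul, ← hrd, hrq]
    calc g * q = p * q - (p * q - g * q) := by abel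
      _ = p * q - (p - g) := by rw [h]
      _ = g + p * q - p := by abel
  -- K1
  have hK1 : g * (p * q - p * q * p) = p * q - p * q * p := by
    have e1 : g * (p * q) = g + p * q - p := by rw [← mul_assoc, hgp, hK0]
    have e2 : g * (p * q * p) = g + p * q * p - p := by
      calc g * (p * q * p) = (g * (p * q)) * p := by rw [← mul_assoc]
        _ = (g + p * q - p) * p := by rw [e1]
        _ = g * p + (p * q) * p - p * p := by rw [sub_mul, add_mul]
        _ = g + p * q * p - p := by rw [hgp, hp1]
    rw [mul_sub, e1, e2]; abel
  -- F = a x, E = x a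
  set F := a * x with hFd
  clear_value F
  set E := x * a with hEd
  clear_value E
  have hFb : F * b = b := by rw [← hab, ← mul_assoc, hx1]
  have hK2 : F * (p * q - p * q * p) = p * q - p * q * p := by
    have h : p * q - p * q * p = b * (y * (p * q - p * q * p)) := by
      calc p * q - p * q * p = g * (p * q - p * q * p) := hK1.symm
        _ = b * (y * (p * q - p * q * p)) := by rw [hgd, mul_assoc]
    rw [h, ← mul_assoc, hFb]
  have hK3 : a - b = (1 - p) - (p * q - p * q * p) := by rw [ha, hb]; noncomm_ring
  have hFab : F * (a - b) = a - b := by rw [mul_sub, hx1, hFb]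
  have hFp : F * p = F - 1 + p := by
    have h : F * (1 - p) - F * (p * q - p * q * p) = (1 - p) - (p * q - p * q * p) := by
      rw [← mul_sub, ← hK3, hFab, hK3]
    rw [hK2] at h
    have h2 : F * (1 - p) = 1 - p := by
      calc F * (1 - p)
          = (F * (1 - p) - (p * q - p * q * p)) + (p * q - p * q * p) := by abel
        _ = ((1 - p) - (p * q - p * q * p)) + (p * q - p * q * p) := by rw [h]
        _ = 1 - p := by abel
    rw [mul_sub, mul_one] at h2
    calc F * p = F - (F - F * p) := by abel
      _ = F - (1 - p) := by rw [h2]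
      _ = F - 1 + p := by abel
  have hpF : p * F = F - 1 + p := by
    have h := congrArg star hFp
    rwa [star_mul, star_add, star_sub, star_one, hx3, hp2] at h
  have hpx : p * x = x - 1 + p := by
    have h1 : p * a * x = p * x + F - x := by
      rw [hFd, hpa, sub_mul, add_mul, one_mul]
    have h2 : p * a * x = F - 1 + p := by rw [mul_assoc, ← hFd, hpF]
    calc p * x = (p * x + F - x) - F + x := by abel
      _ = (F - 1 + p) - F + x := by rw [← h1, h2]
      _ = x - 1 + p := by abel
  have hpE : p * E = E - 1 + p := by
    calc p * E = (p * x) * a := by rw [hEd, ← mul_assoc]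
      _ = (x - 1 + p) * a := by rw [hpx]
      _ = x * a - 1 * a + p * a := by rw [add_mul, sub_mul]
      _ = E - a + (p + a - 1) := by rw [one_mul, ← hEd, hpa]
      _ = E - 1 + p := by abel
  have hEp : E * p = E - 1 + p := by
    have h := congrArg star hpE
    rwa [star_mul, star_add, star_sub, star_one, hx4, hp2] at h
  -- the four Penrose equations for x * p
  have hbx : b * x = F - a + b := by
    calc b * x = (a * p) * x := by rw [hab]
      _ = a * (p * x) := mul_assoc a p x
      _ = a * (x - 1 + p) := by rw [hpx]
      _ = a * (x - 1) + a * p := by rw [mul_add]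
      _ = a * x - a * 1 + a * p := by rw [mul_sub]
      _ = F - a + b := by rw [mul_one, ← hFd, hab]
  have hbc : b * (x * p) = F - 1 + p := by
    calc b * (x * p) = (b * x) * p := (mul_assoc b x p).symm
      _ = (F - a + b) * p := by rw [hbx]
      _ = F * p - a * p + b * p := by rw [add_mul, sub_mul]
      _ = (F - 1 + p) - b + b := by rw [hFp, hab, hbp]
      _ = F - 1 + p := by abel
  have hcb : (x * p) * b = E - 1 + p := by
    calc (x * p) * b = x * (p * b) := mul_assoc _ _ _
      _ = x * b := by rw [hpb]
      _ = x * (a * p) := by rw [hab]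
      _ = (x * a) * p := (mul_assoc _ _ _).symm
      _ = E * p := by rw [← hEd]
      _ = E - 1 + p := hEp
  have c1 : b * (x * p) * b = b := by
    calc b * (x * p) * b = (F - 1 + p) * b := by rw [hbc]
      _ = F * b - 1 * b + p * b := by rw [add_mul, sub_mul]
      _ = b - b + b := by rw [hFb, one_mul, hpb]
      _ = b := by abel
  have c2 : (x * p) * b * (x * p) = x * p := by
    calc (x * p) * b * (x * p) = (E - 1 + p) * (x * p) := by rw [hcb]
      _ = E * (x * p) - 1 * (x * p) + p * (x * p) := by rw [add_mul, sub_mul]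
      _ = (E * x) * p - x * p + (p * x) * p := by
          rw [one_mul, ← mul_assoc, ← mul_assoc]
      _ = x * p - x * p + (x - 1 + p) * p := by rw [hx2, hpx]
      _ = x * p - x * p + (x * p - 1 * p + p * p) := by rw [add_mul, sub_mul]
      _ = x * p := by rw [one_mul, hp1]; abel
  have c3 : star (b * (x * p)) = b * (x * p) := by
    rw [hbc, star_add, star_sub, star_one, hx3, hp2]
  have c4 : star ((x * p) * b) = (x * p) * b := by
    rw [hcb, star_add, star_sub, star_one, hx4, hp2]
  exact mp_unique_aux
    ⟨by rw [← hgd]; exact hy1, hy2, by rw [← hgd]; exact hy3, hy4⟩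
    ⟨c1, c2, c3, c4⟩
end

section
/- Let R be a ring with involution and let p, q ∈ R be projections. If p(1-q) and (1-p)q are both Moore–Penrose invertible, then p - q is Moore–Penrose invertible and (p - q)^† = (1-q)·(p(1-q)p)^† - q·((1-p)q(1-p))^†. -/
theorem aux {R : Type*} [Ring R] [StarRing R] (p q k : R)
    (hp2 : p*p = p) (hps : star p = p) (hq2 : q*q = q) (hqs : star q = q)
    (hmp : IsMPInv (p*(1-q)) k) :
    q * k = 0 ∧ k * p = k ∧ IsMPInv (p*(1-q)*p) (star k * k) ∧
    (p*(1-q))*(star k*k) = (p*(1-q))*k ∧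
    ((1-q)*(star k*k))*(1-q) = k*(p*(1-q)) ∧
    ((p*(1-q))*k)*q = (p*(1-q))*k - p*(1-q) ∧
    (star k*k)*((p*(1-q))*k) = star k*k ∧
    (star k*k)*p = star k*k ∧ p*(star k*k) = star k*k := by
  obtain ⟨h1, h2, h3, h4⟩ := hmp
  have hq1 : q*(1-q) = 0 := by rw [mul_sub, mul_one, hq2, sub_self]
  have h1q : (1-q)*(1-q) = 1-q := by
    rw [sub_mul, one_mul, mul_sub, mul_one, hq2, sub_self, sub_zero]
  have hsa : star (p*(1-q)) = (1-q)*p := by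
    rw [star_mul, star_sub, star_one, hqs, hps]
  have hpa : p*(p*(1-q)) = p*(1-q) := by rw [← mul_assoc, hp2]
  have haq : (p*(1-q))*(1-q) = p*(1-q) := by rw [mul_assoc, h1q]
  have hapA : (p*(1-q))*((1-q)*p) = (p*(1-q))*p := by rw [← mul_assoc, haq]
  have hka : k*(p*(1-q)) = ((1-q)*p)*(star k) := by
    rw [← h4, star_mul, hsa]
  have hak : (p*(1-q))*k = star k*((1-q)*p) := by
    rw [← h3, star_mul, hsa]
  have F1 : q*k = 0 := by
    calc q*k = q*((k*(p*(1-q)))*k) := by rw [h2]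
      _ = ((q*(1-q))*(p*star k))*k := by rw [hka]; noncomm_ring
      _ = 0 := by rw [hq1, zero_mul, zero_mul]
  have F2 : k*p = k := by
    calc k*p = ((k*(p*(1-q)))*k)*p := by rw [h2]
      _ = k*(((p*(1-q))*k)*p) := by noncomm_ring
      _ = k*((star k*((1-q)*p))*p) := by rw [hak]
      _ = k*(star k*((1-q)*(p*p))) := by noncomm_ring
      _ = k*(star k*((1-q)*p)) := by rw [hp2]
      _ = k*((p*(1-q))*k) := by rw [← hak]
      _ = k := by rw [← mul_assoc, h2]
  have hpk' : p*star k = star k := by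
    have h := congrArg star F2
    rw [star_mul, hps] at h
    exact h
  have hk'q : star k*q = 0 := by
    have h := congrArg star F1
    rw [star_mul, hqs, star_zero] at h
    exact h
  have F8 : (star k*k)*p = star k*k := by rw [mul_assoc, F2]
  have F9 : p*(star k*k) = star k*k := by rw [← mul_assoc, hpk']
  have F4 : (p*(1-q))*(star k*k) = (p*(1-q))*k := by
    calc (p*(1-q))*(star k*k)
        = ((p*(1-q))*(p*star k))*k := by rw [hpk']; noncomm_ring
      _ = (((p*(1-q))*p)*star k)*k := by noncomm_ring
      _ = (((p*(1-q))*((1-q)*p))*star k)*k := by rw [hapA]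
      _ = ((p*(1-q))*(((1-q)*p)*star k))*k := by noncomm_ring
      _ = ((p*(1-q))*(k*(p*(1-q))))*k := by rw [← hka]
      _ = (((p*(1-q))*k)*(p*(1-q)))*k := by noncomm_ring
      _ = (p*(1-q))*k := by rw [h1]
  have h2' : k*((p*(1-q))*k) = k := by rw [← mul_assoc, h2]
  have F5 : ((1-q)*(star k*k))*(1-q) = k*(p*(1-q)) := by
    calc ((1-q)*(star k*k))*(1-q)
        = (1-q)*((star k*k)*(1-q)) := by rw [mul_assoc]
      _ = (1-q)*(((star k*k)*p)*(1-q)) := by rw [F8]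
      _ = (1-q)*(((p*(star k*k))*p)*(1-q)) := by rw [F9]
      _ = (((1-q)*p)*star k)*(k*(p*(1-q))) := by noncomm_ring
      _ = (k*(p*(1-q)))*(k*(p*(1-q))) := by rw [← hka]
      _ = (k*((p*(1-q))*k))*(p*(1-q)) := by noncomm_ring
      _ = k*(p*(1-q)) := by rw [h2']
  -- F6
  have s2 : ((1-q)*p)*((p*(1-q))*k) = (1-q)*p := by
    calc ((1-q)*p)*((p*(1-q))*k)
        = star (p*(1-q)) * star ((p*(1-q))*k) := by rw [hsa, h3]
      _ = star (((p*(1-q))*k)*(p*(1-q))) := by rw [← star_mul]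
      _ = star (p*(1-q)) := by rw [h1]
      _ = (1-q)*p := by rw [hsa]
  have s1 : ((1-q)*p)*p = (1-q)*p := by rw [mul_assoc, hp2]
  have hax : ((1-q)*p)*(p - (p*(1-q))*k) = 0 := by
    rw [mul_sub, s1, s2, sub_self]
  have hpx : p*(p - (p*(1-q))*k) = p - (p*(1-q))*k := by
    rw [mul_sub, hp2, ← mul_assoc, hpa]
  have h1qx : (1-q)*(p - (p*(1-q))*k) = 0 := by
    calc (1-q)*(p - (p*(1-q))*k)
        = (1-q)*(p*(p - (p*(1-q))*k)) := by rw [hpx]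
      _ = ((1-q)*p)*(p - (p*(1-q))*k) := by rw [← mul_assoc]
      _ = 0 := hax
  have hqx : q*(p - (p*(1-q))*k) = p - (p*(1-q))*k := by
    rw [sub_mul, one_mul, sub_eq_zero] at h1qx
    exact h1qx.symm
  have hxs : star (p - (p*(1-q))*k) = p - (p*(1-q))*k := by
    rw [star_sub, hps, h3]
  have hxq : (p - (p*(1-q))*k)*q = p - (p*(1-q))*k := by
    have h := congrArg star hqx
    rw [star_mul, hqs, hxs] at h
    exact h
  have F6 : ((p*(1-q))*k)*q = (p*(1-q))*k - p*(1-q) := by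
    have h' : p*q - ((p*(1-q))*k)*q = p - (p*(1-q))*k := by
      rw [← sub_mul]; exact hxq
    have h2'' : ((p*(1-q))*k)*q = p*q - (p - (p*(1-q))*k) := by
      rw [← h']; abel
    rw [h2'', mul_sub, mul_one]; abel
  have F7 : (star k*k)*((p*(1-q))*k) = star k*k := by
    rw [mul_assoc, h2']
  -- F3 : MP inverse of p(1-q)p
  have hAs : star ((p*(1-q))*p) = (p*(1-q))*p := by
    rw [star_mul, hsa, hps, ← mul_assoc]
  have hus : star (star k*k) = star k*k := by rw [star_mul, star_star]
  have hAu : ((p*(1-q))*p)*(star k*k) = (p*(1-q))*k := by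
    rw [mul_assoc, F9, F4]
  have huA : (star k*k)*((p*(1-q))*p) = (p*(1-q))*k := by
    calc (star k*k)*((p*(1-q))*p)
        = star (star ((p*(1-q))*p) * star (star k*k)) := by
          rw [star_mul, star_star, star_star]
      _ = star (((p*(1-q))*p)*(star k*k)) := by rw [hAs, hus]
      _ = star ((p*(1-q))*k) := by rw [hAu]
      _ = (p*(1-q))*k := h3
  have e1u : ((p*(1-q))*k)*(star k*k) = star k*k := by
    calc ((p*(1-q))*k)*(star k*k)
        = star (star (star k*k) * star ((p*(1-q))*k)) := by
          rw [star_mul, star_star, star_star]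
      _ = star ((star k*k)*((p*(1-q))*k)) := by rw [hus, h3]
      _ = star (star k*k) := by rw [F7]
      _ = star k*k := hus
  have F3 : IsMPInv (p*(1-q)*p) (star k * k) := by
    refine ⟨?_, ?_, ?_, ?_⟩
    · show ((p*(1-q))*p)*(star k*k)*((p*(1-q))*p) = (p*(1-q))*p
      rw [hAu]
      calc ((p*(1-q))*k)*((p*(1-q))*p)
          = (((p*(1-q))*k)*(p*(1-q)))*p := by rw [← mul_assoc]
        _ = (p*(1-q))*p := by rw [h1]
    · show (star k*k)*((p*(1-q))*p)*(star k*k) = star k*k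
      rw [huA]
      exact e1u
    · show star (((p*(1-q))*p)*(star k*k)) = ((p*(1-q))*p)*(star k*k)
      rw [hAu]; exact h3
    · show star ((star k*k)*((p*(1-q))*p)) = (star k*k)*((p*(1-q))*p)
      rw [huA]; exact h3
  exact ⟨F1, F2, F3, F4, F5, F6, F7, F8, F9⟩

theorem stmt_8 {R : Type*} [Ring R] [StarRing R] (p q : R)
    (hp : IsProjection p) (hq : IsProjection q)
    (h1 : IsMPInvertible (p * (1 - q))) (h2 : IsMPInvertible ((1 - p) * q)) :
    ∃ u v : R, IsMPInv (p * (1 - q) * p) u ∧ IsMPInv ((1 - p) * q * (1 - p)) v ∧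
      IsMPInv (p - q) ((1 - q) * u - q * v) := by
  obtain ⟨hp2, hps⟩ := hp
  obtain ⟨hq2, hqs⟩ := hq
  obtain ⟨k, hk⟩ := h1
  obtain ⟨l, hl⟩ := h2
  -- instantiate aux for the a-side
  obtain ⟨F1, F2, F3, F4, F5, F6, F7, F8, F9⟩ := aux p q k hp2 hps hq2 hqs hk
  -- instantiate aux for the b-side (p ↦ 1-p, q ↦ 1-q)
  have h1p2 : (1-p)*(1-p) = 1-p := by
    rw [sub_mul, one_mul, mul_sub, mul_one, hp2, sub_self, sub_zero]
  have h1ps : star (1-p) = 1-p := by rw [star_sub, star_one, hps]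
  have h1q2 : (1-q)*(1-q) = 1-q := by
    rw [sub_mul, one_mul, mul_sub, mul_one, hq2, sub_self, sub_zero]
  have h1qs : star (1-q) = 1-q := by rw [star_sub, star_one, hqs]
  have hlb : IsMPInv ((1-p)*(1-(1-q))) l := by rw [sub_sub_cancel]; exact hl
  obtain ⟨G1, G2, G3, G4, G5, G6, G7, G8, G9⟩ :=
    aux (1-p) (1-q) l h1p2 h1ps h1q2 h1qs hlb
  simp only [sub_sub_cancel] at G3 G4 G5 G6 G7
  -- G3 : IsMPInv ((1-p)*q*(1-p)) (star l*l)
  -- G4 : (1-p)*q*(star l*l) = (1-p)*q*l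
  -- G5 : q*(star l*l)*q = l*((1-p)*q)
  -- G6 : (1-p)*q*l*(1-q) = (1-p)*q*l - (1-p)*q
  -- G7 : (star l*l)*((1-p)*q*l) = star l*l
  obtain ⟨ha1, ha2, ha3, ha4⟩ := hk
  obtain ⟨hb1, hb2, hb3, hb4⟩ := hl
  have hq1 : q*(1-q) = 0 := by rw [mul_sub, mul_one, hq2, sub_self]
  have h1pp : (1-p)*p = 0 := by rw [sub_mul, one_mul, hp2, sub_self]
  have hlp : l*p = 0 := by rw [← G2, mul_assoc, h1pp, mul_zero]
  have hk1p : k*(1-p) = 0 := by rw [mul_sub, mul_one, F2, sub_self]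
  have hvp : (star l*l)*p = 0 := by rw [mul_assoc, hlp, mul_zero]
  have hblq : (((1-p)*q)*l)*q = (1-p)*q := by
    have h' := G6
    rw [mul_sub, mul_one] at h'
    exact sub_right_inj.mp h'
  -- de = ak + bl
  have hde : (p-q)*((1-q)*(star k*k) - q*(star l*l))
      = (p*(1-q))*k + ((1-p)*q)*l := by
    calc (p-q)*((1-q)*(star k*k) - q*(star l*l))
        = (p*(1-q))*(star k*k) + ((1-p)*q)*(star l*l)
          - (q*(1-q))*(star k*k) + (q*q)*(star l*l) - q*(star l*l) := by
          noncomm_ring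
      _ = (p*(1-q))*k + ((1-p)*q)*l
          - 0*(star k*k) + q*(star l*l) - q*(star l*l) := by
          rw [F4, G4, hq1, hq2]
      _ = (p*(1-q))*k + ((1-p)*q)*l := by noncomm_ring
  -- ed = ka + lb
  have hed : ((1-q)*(star k*k) - q*(star l*l))*(p-q)
      = k*(p*(1-q)) + l*((1-p)*q) := by
    calc ((1-q)*(star k*k) - q*(star l*l))*(p-q)
        = (1-q)*((star k*k)*p) - ((1-q)*(star k*k))*q
          - q*((star l*l)*p) + (q*(star l*l))*q := by noncomm_ring
      _ = (1-q)*(star k*k) - ((1-q)*(star k*k))*q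
          - q*0 + (q*(star l*l))*q := by rw [F8, hvp]
      _ = ((1-q)*(star k*k))*(1-q) + (q*(star l*l))*q := by noncomm_ring
      _ = k*(p*(1-q)) + l*((1-p)*q) := by rw [F5, G5]
  refine ⟨star k*k, star l*l, F3, G3, ?_, ?_, ?_, ?_⟩
  · -- d e d = d
    calc (p-q)*((1-q)*(star k*k) - q*(star l*l))*(p-q)
        = ((p*(1-q))*k + ((1-p)*q)*l)*(p-q) := by rw [hde]
      _ = ((p*(1-q))*(k*p) - ((p*(1-q))*k)*q)
          + (((1-p)*q)*(l*p) - (((1-p)*q)*l)*q) := by noncomm_ring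
      _ = ((p*(1-q))*k - ((p*(1-q))*k - p*(1-q)))
          + (((1-p)*q)*0 - (1-p)*q) := by rw [F2, F6, hlp, hblq]
      _ = p - q := by noncomm_ring
  · -- e d e = e
    have cross1 : (star k*k)*(((1-p)*q)*l) = 0 := by
      calc (star k*k)*(((1-p)*q)*l)
          = star k*((k*(1-p))*(q*l)) := by noncomm_ring
        _ = 0 := by rw [hk1p, zero_mul, mul_zero]
    have cross2 : (star l*l)*((p*(1-q))*k) = 0 := by
      calc (star l*l)*((p*(1-q))*k)
          = star l*((l*p)*((1-q)*k)) := by noncomm_ring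
        _ = 0 := by rw [hlp, zero_mul, mul_zero]
    calc ((1-q)*(star k*k) - q*(star l*l))*(p-q)*((1-q)*(star k*k) - q*(star l*l))
        = ((1-q)*(star k*k) - q*(star l*l))
          *((p-q)*((1-q)*(star k*k) - q*(star l*l))) := by rw [mul_assoc]
      _ = ((1-q)*(star k*k) - q*(star l*l))*((p*(1-q))*k + ((1-p)*q)*l) := by
          rw [hde]
      _ = ((1-q)*((star k*k)*((p*(1-q))*k)) + (1-q)*((star k*k)*(((1-p)*q)*l)))
          - (q*((star l*l)*((p*(1-q))*k)) + q*((star l*l)*(((1-p)*q)*l))) := by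
          noncomm_ring
      _ = ((1-q)*(star k*k) + (1-q)*0) - (q*0 + q*(star l*l)) := by
          rw [F7, cross1, cross2, G7]
      _ = (1-q)*(star k*k) - q*(star l*l) := by noncomm_ring
  · -- star (d e) = d e
    rw [hde, star_add, ha3, hb3]
  · -- star (e d) = e d
    rw [hed, star_add, ha4, hb4]
end

section
/- Let R be a ring with involution and let p, q ∈ R be projections. Then p - q is Moore–Penrose invertible if and only if both p(1-q) and (1-p)q are Moore–Penrose invertible. -/
lemma mpinv_star {R : Type*} [Ring R] [StarRing R] {a b : R} (h : IsMPInv a b) :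
    IsMPInv (star a) (star b) := by
  refine ⟨?_, ?_, ?_, ?_⟩
  · calc star a * star b * star a = star (a * b * a) := by simp [star_mul, mul_assoc]
      _ = star a := by rw [h.1]
  · calc star b * star a * star b = star (b * a * b) := by simp [star_mul, mul_assoc]
      _ = star b := by rw [h.2.1]
  · rw [← star_mul, star_star]; exact h.2.2.2.symm
  · rw [← star_mul, star_star]; exact h.2.2.1.symm

lemma mpinv_neg {R : Type*} [Ring R] [StarRing R] {a b : R} (h : IsMPInv a b) :
    IsMPInv (-a) (-b) := by
  refine ⟨?_, ?_, ?_, ?_⟩ <;>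
    simp [neg_mul, mul_neg, h.1, h.2.1, h.2.2.1, h.2.2.2]

lemma mp_of_134 {R : Type*} [Ring R] [StarRing R] {x c : R}
    (h1 : x * c * x = x) (h3 : star (x * c) = x * c) (h4 : star (c * x) = c * x) :
    IsMPInvertible x := by
  refine ⟨c * x * c, ?_, ?_, ?_, ?_⟩
  · calc x * (c * x * c) * x = (x * c * x) * (c * x) := by noncomm_ring
      _ = x * (c * x) := by rw [h1]
      _ = x * c * x := by noncomm_ring
      _ = x := h1
  · calc (c * x * c) * x * (c * x * c) = c * ((x * c * x) * (c * x)) * c := by noncomm_ring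
      _ = c * (x * (c * x)) * c := by rw [h1]
      _ = c * (x * c * x) * c := by noncomm_ring
      _ = c * x * c := by rw [h1]
  · calc star (x * (c * x * c)) = star ((x * c) * (x * c)) := by noncomm_ring
      _ = star (x * c) * star (x * c) := by rw [star_mul]
      _ = (x * c) * (x * c) := by rw [h3]
      _ = x * (c * x * c) := by noncomm_ring
  · calc star ((c * x * c) * x) = star ((c * x) * (c * x)) := by noncomm_ring
      _ = star (c * x) * star (c * x) := by rw [star_mul]
      _ = (c * x) * (c * x) := by rw [h4]
      _ = (c * x * c) * x := by noncomm_ring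

lemma aux_forward {R : Type*} [Ring R] [StarRing R] {p q b : R}
    (hp : IsProjection p) (hq : IsProjection q) (hb : IsMPInv (p - q) b) :
    IsMPInvertible (p * (1 - q)) := by
  have e1 : p * (1 - q) = p * (p - q) := by
    simp only [mul_sub, mul_one, hp.1]
  have e2 : p * (p - q) = (p - q) * (1 - q) := by
    simp only [mul_sub, sub_mul, mul_one, hp.1, hq.1]
    abel
  have hq1 : (1 - q) * (1 - q) = 1 - q := by
    simp only [mul_sub, sub_mul, mul_one, one_mul, hq.1]
    abel
  have hsq : star (1 - q) = 1 - q := by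
    simp [star_sub, hq.2]
  have heq : (p * (1 - q)) * ((1 - q) * b * p) = p * ((p - q) * b) * p := by
    calc (p * (1 - q)) * ((1 - q) * b * p)
        = p * ((1 - q) * (1 - q)) * (b * p) := by noncomm_ring
      _ = p * (1 - q) * (b * p) := by rw [hq1]
      _ = p * (p - q) * (b * p) := by rw [e1]
      _ = p * ((p - q) * b) * p := by noncomm_ring
  have heq2 : ((1 - q) * b * p) * (p * (1 - q)) = (1 - q) * (b * (p - q)) * (1 - q) := by
    calc ((1 - q) * b * p) * (p * (1 - q))
        = (1 - q) * b * (p * p) * (1 - q) := by noncomm_ring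
      _ = (1 - q) * b * p * (1 - q) := by rw [hp.1]
      _ = (1 - q) * (b * (p * (1 - q))) := by noncomm_ring
      _ = (1 - q) * (b * (p * (p - q))) := by rw [e1]
      _ = (1 - q) * (b * ((p - q) * (1 - q))) := by rw [e2]
      _ = (1 - q) * (b * (p - q)) * (1 - q) := by noncomm_ring
  refine mp_of_134 (c := (1 - q) * b * p) ?_ ?_ ?_
  · calc (p * (1 - q)) * ((1 - q) * b * p) * (p * (1 - q))
        = (p * ((p - q) * b) * p) * (p * (1 - q)) := by rw [heq]
      _ = p * ((p - q) * b) * (p * p) * (1 - q) := by noncomm_ring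
      _ = p * ((p - q) * b) * p * (1 - q) := by rw [hp.1]
      _ = p * ((p - q) * b * (p * (1 - q))) := by noncomm_ring
      _ = p * ((p - q) * b * (p * (p - q))) := by rw [e1]
      _ = p * ((p - q) * b * ((p - q) * (1 - q))) := by rw [e2]
      _ = p * ((p - q) * b * (p - q) * (1 - q)) := by noncomm_ring
      _ = p * ((p - q) * (1 - q)) := by rw [hb.1]
      _ = p * (p * (p - q)) := by rw [← e2]
      _ = (p * p) * (p - q) := by noncomm_ring
      _ = p * (p - q) := by rw [hp.1]
      _ = p * (1 - q) := e1.symm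
  · rw [heq, star_mul, star_mul, hp.2, hb.2.2.1]; noncomm_ring
  · rw [heq2, star_mul, star_mul, hsq, hb.2.2.2]; noncomm_ring

lemma mp_sub {R : Type*} [Ring R] [StarRing R] {x y b c : R}
    (hb : IsMPInv x b) (hc : IsMPInv y c)
    (hxy : star x * y = 0) (hyx : x * star y = 0) :
    IsMPInv (x - y) (b - c) := by
  have hyx' : y * star x = 0 := by
    have := congrArg star hyx
    simpa [star_mul] using this
  have hxy' : star y * x = 0 := by
    have := congrArg star hxy
    simpa [star_mul] using this
  have hb1 : b = b * (star b * star x) := by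
    calc b = b * x * b := hb.2.1.symm
      _ = b * (x * b) := by rw [mul_assoc]
      _ = b * star (x * b) := by rw [hb.2.2.1]
      _ = b * (star b * star x) := by rw [star_mul]
  have hb2 : b = (star x * star b) * b := by
    calc b = b * x * b := hb.2.1.symm
      _ = star (b * x) * b := by rw [hb.2.2.2]
      _ = (star x * star b) * b := by rw [star_mul]
  have hc1 : c = c * (star c * star y) := by
    calc c = c * y * c := hc.2.1.symm
      _ = c * (y * c) := by rw [mul_assoc]
      _ = c * star (y * c) := by rw [hc.2.2.1]
      _ = c * (star c * star y) := by rw [star_mul]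
  have hc2 : c = (star y * star c) * c := by
    calc c = c * y * c := hc.2.1.symm
      _ = star (c * y) * c := by rw [hc.2.2.2]
      _ = (star y * star c) * c := by rw [star_mul]
  have hby : b * y = 0 := by
    calc b * y = (b * (star b * star x)) * y := by rw [← hb1]
      _ = (b * star b) * (star x * y) := by noncomm_ring
      _ = 0 := by rw [hxy, mul_zero]
  have hyb : y * b = 0 := by
    calc y * b = y * ((star x * star b) * b) := by rw [← hb2]
      _ = (y * star x) * (star b * b) := by noncomm_ring
      _ = 0 := by rw [hyx', zero_mul]
  have hxc : x * c = 0 := by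
    calc x * c = x * ((star y * star c) * c) := by rw [← hc2]
      _ = (x * star y) * (star c * c) := by noncomm_ring
      _ = 0 := by rw [hyx, zero_mul]
  have hcx : c * x = 0 := by
    calc c * x = (c * (star c * star y)) * x := by rw [← hc1]
      _ = (c * star c) * (star y * x) := by noncomm_ring
      _ = 0 := by rw [hxy', mul_zero]
  have hA : (x - y) * (b - c) = x * b + y * c := by
    have h : (x - y) * (b - c) = x * b - x * c - y * b + y * c := by noncomm_ring
    rw [h, hxc, hyb]; abel
  have hB : (b - c) * (x - y) = b * x + c * y := by
    have h : (b - c) * (x - y) = b * x - b * y - c * x + c * y := by noncomm_ring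
    rw [h, hby, hcx]; abel
  refine ⟨?_, ?_, ?_, ?_⟩
  · calc (x - y) * (b - c) * (x - y) = (x * b + y * c) * (x - y) := by rw [hA]
      _ = x * b * x - x * (b * y) + y * (c * x) - y * c * y := by noncomm_ring
      _ = x - y := by rw [hb.1, hby, hcx, hc.1]; simp
  · calc (b - c) * (x - y) * (b - c) = (b * x + c * y) * (b - c) := by rw [hB]
      _ = b * x * b - b * (x * c) + c * (y * b) - c * y * c := by noncomm_ring
      _ = b - c := by rw [hb.2.1, hxc, hyb, hc.2.1]; simp
  · rw [hA, star_add, hb.2.2.1, hc.2.2.1]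
  · rw [hB, star_add, hb.2.2.2, hc.2.2.2]

theorem stmt_9 {R : Type*} [Ring R] [StarRing R] (p q : R)
    (hp : IsProjection p) (hq : IsProjection q) :
    IsMPInvertible (p - q) ↔
      IsMPInvertible (p * (1 - q)) ∧ IsMPInvertible ((1 - p) * q) := by
  constructor
  · rintro ⟨b, hb⟩
    refine ⟨aux_forward hp hq hb, ?_⟩
    have hb' : IsMPInv (q - p) (-b) := by
      have := mpinv_neg hb
      simpa [neg_sub] using this
    obtain ⟨d, hd⟩ := aux_forward hq hp hb'
    have hst : (1 - p) * q = star (q * (1 - p)) := by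
      rw [star_mul, hq.2]; simp [star_sub, hp.2]
    exact ⟨star d, hst ▸ mpinv_star hd⟩
  · rintro ⟨⟨b, hb⟩, ⟨c, hc⟩⟩
    have h0p : p * (1 - p) = 0 := by simp [mul_sub, hp.1]
    have h0q : (1 - q) * q = 0 := by simp [sub_mul, hq.1]
    have hxy : star (p * (1 - q)) * ((1 - p) * q) = 0 := by
      have hs : star (p * (1 - q)) = (1 - q) * p := by
        rw [star_mul, hp.2]; simp [star_sub, hq.2]
      rw [hs]
      calc (1 - q) * p * ((1 - p) * q) = (1 - q) * (p * (1 - p)) * q := by noncomm_ring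
        _ = 0 := by rw [h0p]; simp
    have hyx : (p * (1 - q)) * star ((1 - p) * q) = 0 := by
      have hs : star ((1 - p) * q) = q * (1 - p) := by
        rw [star_mul, hq.2]; simp [star_sub, hp.2]
      rw [hs]
      calc (p * (1 - q)) * (q * (1 - p)) = p * ((1 - q) * q) * (1 - p) := by noncomm_ring
        _ = 0 := by rw [h0q]; simp
    have hsplit : p - q = p * (1 - q) - (1 - p) * q := by noncomm_ring
    rw [hsplit]
    exact ⟨b - c, mp_sub hb hc hxy hyx⟩
end

section
/- Let R be a ring with involution and let p, q ∈ R be projections. If p - q is Moore–Penrose invertible, then p(1-q) is Moore–Penrose invertible and (p(1-q))^† = (p - q)^†·p. -/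
theorem stmt_10 {R : Type*} [Ring R] [StarRing R] (p q t : R)
    (hp : IsProjection p) (hq : IsProjection q)
    (ht : IsMPInv (p - q) t) :
    IsMPInv (p * (1 - q)) (t * p) := by
  obtain ⟨hp1, hp2⟩ := hp
  obtain ⟨hq1, hq2⟩ := hq
  obtain ⟨h1, h2, h3, h4⟩ := ht
  have hsa : star (p - q) = p - q := by rw [star_sub, hp2, hq2]
  -- (A) : star t * (p - q) = (p - q) * t
  have hA : star t * (p - q) = (p - q) * t := by
    rw [← h3, star_mul, hsa]
  -- (B) : (p - q) * star t = t * (p - q)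
  have hB : (p - q) * star t = t * (p - q) := by
    rw [← h4, star_mul, hsa]
  -- a t = t a
  have hat : (p - q) * t = t * (p - q) := by
    calc (p - q) * t = star t * (p - q) := hA.symm
      _ = star t * ((p - q) * t * (p - q)) := by rw [h1]
      _ = (star t * (p - q)) * (t * (p - q)) := by simp only [mul_assoc]
      _ = ((p - q) * t) * ((p - q) * star t) := by rw [hA, hB]
      _ = ((p - q) * t * (p - q)) * star t := by simp only [mul_assoc]
      _ = (p - q) * star t := by rw [h1]
      _ = t * (p - q) := hB
  -- e := (p-q) * t
  have hestar : star ((p - q) * t) = (p - q) * t := h3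
  have hea : ((p - q) * t) * (p - q) = p - q := h1
  have het : ((p - q) * t) * t = t := by
    rw [hat]; exact h2
  have hae : (p - q) * ((p - q) * t) = p - q := by
    rw [hat, ← mul_assoc]; exact h1
  -- a^2 commutes with p and q
  have hc2p : (p - q) * (p - q) * p = p * ((p - q) * (p - q)) := by
    simp only [sub_mul, mul_sub, mul_assoc, hp1, hq1]
    simp only [← mul_assoc, hp1, hq1]
    abel
  have hc2q : (p - q) * (p - q) * q = q * ((p - q) * (p - q)) := by
    simp only [sub_mul, mul_sub, mul_assoc, hp1, hq1]
    simp only [← mul_assoc, hp1, hq1]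
    abel
  -- e = a^2 t^2
  have he2 : ((p - q) * (p - q)) * (t * t) = (p - q) * t := by
    calc ((p - q) * (p - q)) * (t * t)
        = (p - q) * ((p - q) * t) * t := by simp only [mul_assoc]
      _ = (p - q) * (t * (p - q)) * t := by rw [hat]
      _ = ((p - q) * t * (p - q)) * t := by simp only [mul_assoc]
      _ = (p - q) * t := by rw [h1]
  have hea2 : ((p - q) * t) * ((p - q) * (p - q)) = (p - q) * (p - q) := by
    calc ((p - q) * t) * ((p - q) * (p - q))
        = (((p - q) * t) * (p - q)) * (p - q) := by simp only [mul_assoc]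
      _ = (p - q) * (p - q) := by rw [hea]
  -- e p e = p e
  have hepe : ((p - q) * t) * p * ((p - q) * t) = p * ((p - q) * t) := by
    calc ((p - q) * t) * p * ((p - q) * t)
        = ((p - q) * t) * p * (((p - q) * (p - q)) * (t * t)) := by rw [he2]
      _ = ((p - q) * t) * (p * ((p - q) * (p - q))) * (t * t) := by
          simp only [mul_assoc]
      _ = ((p - q) * t) * ((p - q) * (p - q) * p) * (t * t) := by rw [hc2p]
      _ = (((p - q) * t) * ((p - q) * (p - q))) * (p * (t * t)) := by
          simp only [mul_assoc]
      _ = ((p - q) * (p - q)) * (p * (t * t)) := by rw [hea2]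
      _ = ((p - q) * (p - q) * p) * (t * t) := by simp only [mul_assoc]
      _ = (p * ((p - q) * (p - q))) * (t * t) := by rw [hc2p]
      _ = p * (((p - q) * (p - q)) * (t * t)) := by simp only [mul_assoc]
      _ = p * ((p - q) * t) := by rw [he2]
  have heqe : ((p - q) * t) * q * ((p - q) * t) = q * ((p - q) * t) := by
    calc ((p - q) * t) * q * ((p - q) * t)
        = ((p - q) * t) * q * (((p - q) * (p - q)) * (t * t)) := by rw [he2]
      _ = ((p - q) * t) * (q * ((p - q) * (p - q))) * (t * t) := by
          simp only [mul_assoc]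
      _ = ((p - q) * t) * ((p - q) * (p - q) * q) * (t * t) := by rw [hc2q]
      _ = (((p - q) * t) * ((p - q) * (p - q))) * (q * (t * t)) := by
          simp only [mul_assoc]
      _ = ((p - q) * (p - q)) * (q * (t * t)) := by rw [hea2]
      _ = ((p - q) * (p - q) * q) * (t * t) := by simp only [mul_assoc]
      _ = (q * ((p - q) * (p - q))) * (t * t) := by rw [hc2q]
      _ = q * (((p - q) * (p - q)) * (t * t)) := by simp only [mul_assoc]
      _ = q * ((p - q) * t) := by rw [he2]
  -- e p = p e
  have hep : ((p - q) * t) * p = p * ((p - q) * t) := by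
    have h' := congrArg star hepe
    simp only [star_mul, hestar, hp2] at h'
    calc ((p - q) * t) * p
        = ((p - q) * t) * (p * ((p - q) * t)) := h'.symm
      _ = ((p - q) * t) * p * ((p - q) * t) := by rw [← mul_assoc]
      _ = p * ((p - q) * t) := hepe
  have heq : ((p - q) * t) * q = q * ((p - q) * t) := by
    have h' := congrArg star heqe
    simp only [star_mul, hestar, hq2] at h'
    calc ((p - q) * t) * q
        = ((p - q) * t) * (q * ((p - q) * t)) := h'.symm
      _ = ((p - q) * t) * q * ((p - q) * t) := by rw [← mul_assoc]
      _ = q * ((p - q) * t) := heqe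
  -- p a = a (1-q)
  have hpa : p * (p - q) = (p - q) * (1 - q) := by
    simp only [mul_sub, sub_mul, mul_one, one_mul, hp1, hq1]
    abel
  -- key : t p = (1-q) t
  have htp : t * p = (1 - q) * t := by
    have h6 : (p - q) * (t * p) = (p - q) * ((1 - q) * t) := by
      calc (p - q) * (t * p) = ((p - q) * t) * p := by rw [mul_assoc]
        _ = p * ((p - q) * t) := hep
        _ = (p * (p - q)) * t := by rw [mul_assoc]
        _ = ((p - q) * (1 - q)) * t := by rw [hpa]
        _ = (p - q) * ((1 - q) * t) := by rw [mul_assoc]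
    calc t * p = (t * (p - q) * t) * p := by rw [h2]
      _ = t * ((p - q) * (t * p)) := by simp only [mul_assoc]
      _ = t * ((p - q) * ((1 - q) * t)) := by rw [h6]
      _ = (t * (p - q)) * (1 - q) * t := by simp only [mul_assoc]
      _ = ((p - q) * t) * (1 - q) * t := by rw [hat]
      _ = (((p - q) * t) - ((p - q) * t) * q) * t := by
          rw [mul_sub, mul_one]
      _ = (((p - q) * t) - q * ((p - q) * t)) * t := by rw [heq]
      _ = ((1 - q) * ((p - q) * t)) * t := by conv_rhs => rw [sub_mul, one_mul]
      _ = (1 - q) * (((p - q) * t) * t) := by rw [mul_assoc]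
      _ = (1 - q) * t := by rw [het]
  -- A = p(1-q) = p(p-q)
  have hA1 : p * (1 - q) = p * (p - q) := by
    simp only [mul_sub, mul_one, hp1]
  have h1q : (1 - q) * (1 - q) = 1 - q := by
    simp only [sub_mul, mul_sub, mul_one, one_mul, hq1]
    abel
  refine ⟨?_, ?_, ?_, ?_⟩
  · -- A b A = A
    calc p * (1 - q) * (t * p) * (p * (1 - q))
        = p * (p - q) * (t * p) * (p * (p - q)) := by rw [hA1]
      _ = p * (((p - q) * t) * (p * p)) * (p - q) := by simp only [mul_assoc]
      _ = p * (((p - q) * t) * p) * (p - q) := by rw [hp1]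
      _ = p * (p * ((p - q) * t)) * (p - q) := by rw [hep]
      _ = (p * p) * (((p - q) * t) * (p - q)) := by simp only [mul_assoc]
      _ = p * ((p - q) * t * (p - q)) := by rw [hp1, mul_assoc]
      _ = p * (p - q) := by rw [h1]
      _ = p * (1 - q) := hA1.symm
  · -- b A b = b
    calc (t * p) * (p * (1 - q)) * (t * p)
        = (t * p) * (p * (p - q)) * (t * p) := by rw [hA1]
      _ = t * (p * p) * ((p - q) * (t * p)) := by simp only [mul_assoc]
      _ = (t * p) * ((p - q) * (t * p)) := by rw [hp1]
      _ = ((1 - q) * t) * ((p - q) * (t * p)) := by rw [htp]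
      _ = (1 - q) * (t * (p - q) * t) * p := by simp only [mul_assoc]
      _ = (1 - q) * (t * p) := by rw [h2, mul_assoc]
      _ = (1 - q) * ((1 - q) * t) := by rw [htp]
      _ = ((1 - q) * (1 - q)) * t := by rw [mul_assoc]
      _ = (1 - q) * t := by rw [h1q]
      _ = t * p := htp.symm
  · -- star (A b) = A b
    have hAb : p * (1 - q) * (t * p) = p * ((p - q) * t) * p := by
      calc p * (1 - q) * (t * p) = p * (p - q) * (t * p) := by rw [hA1]
        _ = p * ((p - q) * t) * p := by simp only [mul_assoc]
    rw [hAb, star_mul, star_mul, hestar, hp2]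
    simp only [mul_assoc]
  · -- star (b A) = b A
    have hbA : (t * p) * (p * (1 - q)) = (1 - q) * ((p - q) * t) := by
      calc (t * p) * (p * (1 - q)) = (t * p) * (p * (p - q)) := by rw [hA1]
        _ = t * (p * p) * (p - q) := by simp only [mul_assoc]
        _ = (t * p) * (p - q) := by rw [hp1]
        _ = ((1 - q) * t) * (p - q) := by rw [htp]
        _ = (1 - q) * (t * (p - q)) := by rw [mul_assoc]
        _ = (1 - q) * ((p - q) * t) := by rw [hat]
    rw [hbA]
    have hq2' : star (1 - q) = 1 - q := by rw [star_sub, star_one, hq2]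
    rw [star_mul, hestar, hq2']
    calc ((p - q) * t) * (1 - q)
        = ((p - q) * t) - ((p - q) * t) * q := by rw [mul_sub, mul_one]
      _ = ((p - q) * t) - q * ((p - q) * t) := by rw [heq]
      _ = (1 - q) * ((p - q) * t) := by conv_rhs => rw [sub_mul, one_mul]
end
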